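/- arXiv:1404.1589 — 15 statements merged into one kernel-verified Lean document; each statement's English description precedes it below -/
import Mathlib

section
/- Let S be a *-semigroup. The maps I ↦ I_+ and I ↦ √I are mutually inverse inclusion-preserving bijections between the set of left rooted left ideals of S and the set of positive rooted, positive hereditary subsets of S_+; moreover I_+ = I² for every left rooted left ideal I. -/
namespace Stmt1

/-- The set `S₊ = {t* t : t ∈ S}` of positive elements. -/
def Pos (S : Type*) [Mul S] [Star S] : Set S := {x | ∃ t : S, x = star t * t}

/-- `√T = {s : s* s ∈ T}`. -/
def sqrtS {S : Type*} [Mul S] [Star S] (T : Set S) : Set S := {s | star s * s ∈ T}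

/-- `T² = {t* t : t ∈ T}`. -/
def sq {S : Type*} [Mul S] [Star S] (T : Set S) : Set S := {x | ∃ t ∈ T, x = star t * t}

/-- `T` is a left ideal: `S T ⊆ T`. -/
def IsLeftIdeal {S : Type*} [Mul S] (T : Set S) : Prop := ∀ s : S, ∀ t ∈ T, s * t ∈ T

/-- `T` is left rooted: `s* s ∈ T → s ∈ T`. -/
def IsLeftRooted {S : Type*} [Mul S] [Star S] (T : Set S) : Prop :=
  ∀ s : S, star s * s ∈ T → s ∈ T

/-- `T` is positive rooted: `√T ∩ S₊ ⊆ T`. -/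
def IsPosRooted {S : Type*} [Mul S] [Star S] (T : Set S) : Prop :=
  ∀ s : S, s ∈ Pos S → star s * s ∈ T → s ∈ T

/-- `T` is positive hereditary: `t* t ∈ T → t* s t ∈ T` for all `s ∈ S₊`. -/
def IsPosHereditary {S : Type*} [Mul S] [Star S] (T : Set S) : Prop :=
  ∀ t : S, star t * t ∈ T → ∀ s ∈ Pos S, star t * s * t ∈ T

/-- In a *-semigroup `S`, the maps `I ↦ I₊ = I ∩ S₊` and `I ↦ √I`
are mutually inverse inclusion-preserving bijections between the left rooted left
ideals of `S` and the positive rooted positive hereditary subsets of `S₊`;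
moreover `I₊ = I²` for every left rooted left ideal `I`. -/
theorem stmt_1 {S : Type*} [Semigroup S] [StarMul S] :
    (∀ I : Set S, IsLeftRooted I → IsLeftIdeal I →
      (I ∩ Pos S ⊆ Pos S ∧ IsPosRooted (I ∩ Pos S) ∧ IsPosHereditary (I ∩ Pos S)) ∧
      sqrtS (I ∩ Pos S) = I ∧ I ∩ Pos S = sq I) ∧
    (∀ J : Set S, J ⊆ Pos S → IsPosRooted J → IsPosHereditary J →
      (IsLeftRooted (sqrtS J) ∧ IsLeftIdeal (sqrtS J)) ∧ sqrtS J ∩ Pos S = J) ∧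
    (∀ I I' : Set S, I ⊆ I' → I ∩ Pos S ⊆ I' ∩ Pos S) ∧
    (∀ J J' : Set S, J ⊆ J' → sqrtS J ⊆ sqrtS J') := by

  refine ⟨?_, ?_, ?_, ?_⟩
  · intro I hroot hideal
    refine ⟨⟨Set.inter_subset_right, ?_, ?_⟩, ?_, ?_⟩
    · intro s hs hss
      exact ⟨hroot s hss.1, hs⟩
    · intro t ht s hs
      obtain ⟨r, rfl⟩ := hs
      have htI : t ∈ I := hroot t ht.1
      have hrt : r * t ∈ I := hideal r t htI
      have : star (r * t) * (r * t) ∈ I := hideal (star (r * t)) (r * t) hrt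
      constructor
      · simpa [star_mul, mul_assoc] using this
      · exact ⟨r * t, by simp [star_mul, mul_assoc]⟩
    · ext s
      constructor
      · intro hs
        exact hroot s hs.1
      · intro hs
        exact ⟨hideal (star s) s hs, ⟨s, rfl⟩⟩
    · ext x
      constructor
      · rintro ⟨hxI, t, rfl⟩
        exact ⟨t, hroot t hxI, rfl⟩
      · rintro ⟨t, htI, rfl⟩
        exact ⟨hideal (star t) t htI, ⟨t, rfl⟩⟩
  · intro J hJP hroot hher
    refine ⟨⟨?_, ?_⟩, ?_⟩
    · intro s hs
      exact hroot (star s * s) ⟨s, rfl⟩ hs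
    · intro s t ht
      have := hher t ht (star s * s) ⟨s, rfl⟩
      show star (s * t) * (s * t) ∈ J
      simpa [star_mul, mul_assoc] using this
    · ext x
      constructor
      · rintro ⟨hx, hxP⟩
        exact hroot x hxP hx
      · intro hx
        obtain ⟨t, rfl⟩ := hJP hx
        refine ⟨?_, ⟨t, rfl⟩⟩
        have := hher t hx (t * star t) ⟨star t, by simp⟩
        show star (star t * t) * (star t * t) ∈ J
        simpa [star_mul, mul_assoc] using this
  · intro I I' h
    exact Set.inter_subset_inter_left _ h
  · intro J J' h s hs
    exact h hs

end Stmt1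
end

section
/- Let S be a *-semigroup. The maps I ↦ I ∩ I* and I ↦ √I are mutually inverse inclusion-preserving bijections between the set of left rooted left ideals of S and the set of quasi-rooted hereditary *-subsemigroups of S. -/
namespace Stmt2

/-- `T* = {t* : t ∈ T}`. -/
def starSet {S : Type*} [Star S] (T : Set S) : Set S := star '' T

/-- `√T = {s : s* s ∈ T}`. -/
def sqrtS {S : Type*} [Mul S] [Star S] (T : Set S) : Set S := {s | star s * s ∈ T}

/-- `T` is a left ideal: `S T ⊆ T`. -/
def IsLeftIdeal {S : Type*} [Mul S] (T : Set S) : Prop := ∀ s : S, ∀ t ∈ T, s * t ∈ T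

/-- `T` is left rooted: `s* s ∈ T → s ∈ T`. -/
def IsLeftRooted {S : Type*} [Mul S] [Star S] (T : Set S) : Prop :=
  ∀ s : S, star s * s ∈ T → s ∈ T

/-- `T` is quasi-rooted: `s* s ∈ T` and `s s* ∈ T` imply `s ∈ T`. -/
def IsQuasiRooted {S : Type*} [Mul S] [Star S] (T : Set S) : Prop :=
  ∀ s : S, star s * s ∈ T → s * star s ∈ T → s ∈ T

/-- `T` is hereditary: `t* t ∈ T → t* s t ∈ T` for all `s ∈ S`. -/
def IsHereditary {S : Type*} [Mul S] [Star S] (T : Set S) : Prop :=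
  ∀ t : S, star t * t ∈ T → ∀ s : S, star t * s * t ∈ T

/-- `T` is a *-subsemigroup: `T = T*` and `T T ⊆ T`. -/
def IsStarSubsemigroup {S : Type*} [Mul S] [Star S] (T : Set S) : Prop :=
  starSet T = T ∧ ∀ a ∈ T, ∀ b ∈ T, a * b ∈ T

section InvolutiveStar

variable {S : Type*} [InvolutiveStar S]

lemma mem_starSet {T : Set S} {x : S} : x ∈ starSet T ↔ star x ∈ T := by
  constructor
  · rintro ⟨t, ht, rfl⟩
    rwa [star_star]
  · exact fun h => ⟨star x, h, star_star x⟩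

lemma starSet_mono {T T' : Set S} (h : T ⊆ T') : starSet T ⊆ starSet T' :=
  Set.image_mono h

lemma starSet_inter_starSet (T : Set S) : starSet (T ∩ starSet T) = T ∩ starSet T := by
  ext x
  simp only [mem_starSet, Set.mem_inter_iff, star_star]
  exact And.comm

end InvolutiveStar

section StarMul

variable {S : Type*} [Mul S] [StarMul S]

lemma mem_starSet_sqrtS {T : Set S} {x : S} : x ∈ starSet (sqrtS T) ↔ x * star x ∈ T := by
  rw [mem_starSet, sqrtS, Set.mem_ofPred_eq, star_star]

lemma sqrtS_mono {T T' : Set S} (h : T ⊆ T') : sqrtS T ⊆ sqrtS T' :=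
  fun _ hs => h hs

lemma IsLeftIdeal.star_mul_self_mem {I : Set S} (hI : IsLeftIdeal I) {s : S} (hs : s ∈ I) :
    star s * s ∈ I :=
  hI (star s) s hs

lemma IsLeftRooted.isQuasiRooted_inter_starSet {I : Set S} (hI : IsLeftRooted I) :
    IsQuasiRooted (I ∩ starSet I) := by
  refine fun s hs hs' => ⟨hI s hs.1, mem_starSet.mpr (hI (star s) ?_)⟩
  rw [star_star]
  exact hs'.1

lemma IsLeftIdeal.isStarSubsemigroup_inter_starSet {I : Set S} (hI : IsLeftIdeal I) :
    IsStarSubsemigroup (I ∩ starSet I) := by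
  refine ⟨starSet_inter_starSet I, fun a ha b hb => ⟨hI a b hb.1, ?_⟩⟩
  rw [mem_starSet, star_mul]
  exact hI (star b) (star a) (mem_starSet.mp ha.2)

lemma IsLeftIdeal.sqrtS_inter_starSet_eq {I : Set S} (hroot : IsLeftRooted I)
    (hI : IsLeftIdeal I) : sqrtS (I ∩ starSet I) = I := by
  ext s
  have hsa : star (star s * s) = star s * s := (IsSelfAdjoint.star_mul_self s).star_eq
  simp only [sqrtS, Set.mem_ofPred_eq, Set.mem_inter_iff, mem_starSet, hsa, and_self]
  exact ⟨hroot s, hI.star_mul_self_mem⟩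

lemma IsQuasiRooted.isLeftRooted_sqrtS {J : Set S} (hJ : IsQuasiRooted J) :
    IsLeftRooted (sqrtS J) := by
  intro s hs
  -- `s* s` is self-adjoint, so both hypotheses of quasi-rootedness for it reduce to `hs`.
  have hsa : star (star s * s) = star s * s := (IsSelfAdjoint.star_mul_self s).star_eq
  have hs' : star (star s * s) * (star s * s) ∈ J := hs
  exact hJ _ hs' (by rwa [hsa] at hs' ⊢)

lemma IsStarSubsemigroup.star_mem {J : Set S} (hJ : IsStarSubsemigroup J) {x : S}
    (hx : x ∈ J) : star x ∈ J := by
  rw [← hJ.1, mem_starSet, star_star]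
  exact hx

lemma IsQuasiRooted.sqrtS_inter_starSet_sqrtS {J : Set S} (hq : IsQuasiRooted J)
    (hJ : IsStarSubsemigroup J) : sqrtS J ∩ starSet (sqrtS J) = J := by
  ext x
  rw [Set.mem_inter_iff, mem_starSet_sqrtS]
  refine ⟨fun h => hq x h.1 h.2, fun hx => ⟨?_, ?_⟩⟩
  · exact hJ.2 _ (hJ.star_mem hx) _ hx
  · exact hJ.2 _ hx _ (hJ.star_mem hx)

end StarMul

section Semigroup

variable {S : Type*} [Semigroup S] [StarMul S]

lemma IsLeftIdeal.isHereditary_inter_starSet {I : Set S} (hroot : IsLeftRooted I)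
    (hI : IsLeftIdeal I) : IsHereditary (I ∩ starSet I) := by
  intro t ht s
  have htI : t ∈ I := hroot t ht.1
  refine ⟨?_, mem_starSet.mpr ?_⟩
  · rw [mul_assoc]
    exact hI _ _ (hI _ _ htI)
  · rw [star_mul, star_mul, star_star]
    exact hI _ _ (hI _ _ htI)

lemma IsHereditary.isLeftIdeal_sqrtS {J : Set S} (hJ : IsHereditary J) :
    IsLeftIdeal (sqrtS J) := by
  intro s t ht
  have h : star (s * t) * (s * t) = star t * (star s * s) * t := by
    simp only [star_mul, mul_assoc]
  show star (s * t) * (s * t) ∈ J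
  rw [h]
  exact hJ t ht _

end Semigroup

/-- In a *-semigroup `S`, the maps `I ↦ I ∩ I*` and `I ↦ √I`
are mutually inverse inclusion-preserving bijections between the left rooted left
ideals of `S` and the quasi-rooted hereditary *-subsemigroups of `S`. -/
theorem stmt_2 {S : Type*} [Semigroup S] [StarMul S] :
    (∀ I : Set S, IsLeftRooted I → IsLeftIdeal I →
      (IsQuasiRooted (I ∩ starSet I) ∧ IsHereditary (I ∩ starSet I) ∧
        IsStarSubsemigroup (I ∩ starSet I)) ∧
      sqrtS (I ∩ starSet I) = I) ∧
    (∀ J : Set S, IsQuasiRooted J → IsHereditary J → IsStarSubsemigroup J →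
      (IsLeftRooted (sqrtS J) ∧ IsLeftIdeal (sqrtS J)) ∧
      sqrtS J ∩ starSet (sqrtS J) = J) ∧
    (∀ I I' : Set S, I ⊆ I' → I ∩ starSet I ⊆ I' ∩ starSet I') ∧
    (∀ J J' : Set S, J ⊆ J' → sqrtS J ⊆ sqrtS J') := by
  refine ⟨fun I hroot hI => ?_, fun J hq hh hJ => ?_, fun I I' h => ?_, fun J J' => sqrtS_mono⟩
  · exact ⟨⟨hroot.isQuasiRooted_inter_starSet, hI.isHereditary_inter_starSet hroot,
      hI.isStarSubsemigroup_inter_starSet⟩, hI.sqrtS_inter_starSet_eq hroot⟩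
  · exact ⟨⟨hq.isLeftRooted_sqrtS, hh.isLeftIdeal_sqrtS⟩, hq.sqrtS_inter_starSet_sqrtS hJ⟩
  · exact Set.inter_subset_inter h (starSet_mono h)

end Stmt2
end

section
/- Let S be a proper *-semigroup and T ⊆ S. Then: (1) T^∇ is an ideal of S which is rooted (s* s ∈ T^∇ implies s ∈ T^∇ and s* ∈ T^∇), and hence self-adjoint; (2) T^L = √(T^⊥) = (T²)^L and T^L is a left rooted left ideal; (3) T^⊥ = T^L ∩ (T^L)* and T^⊥ is a self-adjoint, quasi-rooted, hereditary quasi-ideal; (4) (T^L)^L = (T^⊥)^L; (5) if T is a right ideal (T S ⊆ T) then T^∇ = T^⊥ = T^L. -/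
namespace Stmt3

/-- `T* = {t* : t ∈ T}`. -/
def starSet {S : Type*} [Star S] (T : Set S) : Set S := star '' T

/-- `√T = {s : s* s ∈ T}`. -/
def sqrtS {S : Type*} [Mul S] [Star S] (T : Set S) : Set S := {s | star s * s ∈ T}

/-- `T² = {t* t : t ∈ T}`. -/
def sq {S : Type*} [Mul S] [Star S] (T : Set S) : Set S := {x | ∃ t ∈ T, x = star t * t}

/-- The left annihilator `T^L = {s : t s* = 0 for all t ∈ T}`. -/
def lAnn {S : Type*} [Mul S] [Star S] [Zero S] (T : Set S) : Set S :=
  {s | ∀ t ∈ T, t * star s = 0}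

/-- The *-annihilator `T^⊥ = {s : t s* = 0 and t s = 0 for all t ∈ T}`. -/
def pAnn {S : Type*} [Mul S] [Star S] [Zero S] (T : Set S) : Set S :=
  {s | ∀ t ∈ T, t * star s = 0 ∧ t * s = 0}

/-- The annihilator ideal `T^∇ = {s : t u s = 0 for all t ∈ T, u ∈ S}`. -/
def nAnn {S : Type*} [Mul S] [Star S] [Zero S] (T : Set S) : Set S :=
  {s | ∀ t ∈ T, ∀ u : S, t * u * s = 0}

section helpers
variable {S : Type*} [SemigroupWithZero S] [StarMul S]

omit [SemigroupWithZero S] [StarMul S] in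
lemma mem_starSet [InvolutiveStar S] {A : Set S} {x : S} :
    x ∈ starSet A ↔ star x ∈ A := by
  constructor
  · rintro ⟨a, ha, rfl⟩; rwa [star_star]
  · intro h; exact ⟨star x, h, star_star x⟩

lemma starZero (hp : ∀ s : S, star s * s = 0 → s = 0) : (star (0:S)) = 0 :=
  hp _ (by rw [star_star, zero_mul])

lemma ofStarZero (hp : ∀ s : S, star s * s = 0 → s = 0) {x : S} (h : star x = 0) : x = 0 := by
  have := congrArg star h
  rw [star_star] at this
  rw [this, starZero hp]

/-- `a b b* = 0 → a b = 0`. -/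
lemma mulR (hp : ∀ s : S, star s * s = 0 → s = 0) {a b : S} (h : a * b * star b = 0) :
    a * b = 0 := by
  apply ofStarZero hp
  apply hp
  rw [star_star, star_mul, ← mul_assoc, h, zero_mul]

/-- `a* a b = 0 → a b = 0`. -/
lemma mulL (hp : ∀ s : S, star s * s = 0 → s = 0) {a b : S} (h : star a * a * b = 0) :
    a * b = 0 := by
  apply hp
  rw [star_mul, mul_assoc, ← mul_assoc (star a), h, mul_zero]

end helpers

theorem stmt_3 {S : Type*} [SemigroupWithZero S] [StarMul S]
    (hproper : ∀ s : S, star s * s = 0 → s = 0) (T : Set S) :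
    -- (1) T^∇ is a rooted ideal, hence self-adjoint
    ((∀ s : S, ∀ t ∈ nAnn T, s * t ∈ nAnn T ∧ t * s ∈ nAnn T) ∧
     (∀ s : S, star s * s ∈ nAnn T → s ∈ nAnn T ∧ star s ∈ nAnn T) ∧
     starSet (nAnn T) = nAnn T) ∧
    -- (2) T^L = √(T^⊥) = (T²)^L is a left rooted left ideal
    (lAnn T = sqrtS (pAnn T) ∧ lAnn T = lAnn (sq T) ∧
     (∀ s : S, star s * s ∈ lAnn T → s ∈ lAnn T) ∧
     (∀ s : S, ∀ t ∈ lAnn T, s * t ∈ lAnn T)) ∧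
    -- (3) T^⊥ = T^L ∩ (T^L)* is a self-adjoint quasi-rooted hereditary quasi-ideal
    (pAnn T = lAnn T ∩ starSet (lAnn T) ∧
     starSet (pAnn T) = pAnn T ∧
     (∀ s : S, star s * s ∈ pAnn T → s * star s ∈ pAnn T → s ∈ pAnn T) ∧
     (∀ t : S, star t * t ∈ pAnn T → ∀ s : S, star t * s * t ∈ pAnn T) ∧
     (∀ x : S, (∃ a ∈ pAnn T, ∃ s : S, x = a * s) →
        (∃ b ∈ pAnn T, ∃ s : S, x = s * b) → x ∈ pAnn T) ∧
     (∀ a ∈ pAnn T, ∀ b ∈ pAnn T, a * b ∈ pAnn T)) ∧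
    -- (4) (T^L)^L = (T^⊥)^L
    lAnn (lAnn T) = lAnn (pAnn T) ∧
    -- (5) if T is a right ideal then T^∇ = T^⊥ = T^L
    ((∀ t ∈ T, ∀ s : S, t * s ∈ T) → nAnn T = pAnn T ∧ pAnn T = lAnn T) := by
  have hp := hproper
  -- (1)
  have hideal : ∀ s : S, ∀ t ∈ nAnn T, s * t ∈ nAnn T ∧ t * s ∈ nAnn T := by
    intro s t ht
    constructor
    · intro t' ht' u
      rw [← mul_assoc, mul_assoc t' u s]
      exact ht t' ht' (u * s)
    · intro t' ht' u
      rw [← mul_assoc, ht t' ht' u, zero_mul]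
  have hrooted : ∀ s : S, star s * s ∈ nAnn T → s ∈ nAnn T ∧ star s ∈ nAnn T := by
    intro s hs
    constructor
    · intro t ht u
      apply mulR hp
      apply mulR hp
      rw [star_star]
      simpa only [mul_assoc] using hs t ht (u * s)
    · intro t ht u
      apply mulR hp
      rw [star_star]
      simpa only [mul_assoc] using hs t ht u
  have hnstar : ∀ s : S, s ∈ nAnn T → star s ∈ nAnn T := by
    intro s hs
    exact (hrooted s ((hideal (star s) s hs).1)).2
  refine ⟨⟨hideal, hrooted, ?_⟩, ?_, ?_, ?_, ?_⟩
  · ext x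
    rw [mem_starSet]
    constructor
    · intro h
      have := hnstar _ h
      rwa [star_star] at this
    · exact hnstar x
  -- (2)
  · refine ⟨?_, ?_, ?_, ?_⟩
    · ext s
      constructor
      · intro h t ht
        have h0 : t * (star s * s) = 0 := by rw [← mul_assoc, h t ht, zero_mul]
        refine ⟨?_, h0⟩
        rw [star_mul, star_star]
        exact h0
      · intro h t ht
        have h0 := (h t ht).2
        apply mulR hp
        rw [star_star, mul_assoc]
        exact h0
    · ext s
      constructor
      · rintro h x ⟨t, ht, rfl⟩
        rw [mul_assoc, h t ht, mul_zero]
      · intro h t ht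
        exact mulL hp (h _ ⟨t, ht, rfl⟩)
    · intro s hs t ht
      have h0 := hs t ht
      rw [star_mul, star_star] at h0
      apply mulR hp
      rw [star_star, mul_assoc]
      exact h0
    · intro s t ht t' ht'
      rw [star_mul, ← mul_assoc, ht t' ht', zero_mul]
  -- (3)
  · refine ⟨?_, ?_, ?_, ?_, ?_, ?_⟩
    · ext s
      constructor
      · intro h
        refine ⟨fun t ht => (h t ht).1, mem_starSet.mpr fun t ht => ?_⟩
        rw [star_star]
        exact (h t ht).2
      · rintro ⟨h1, h2⟩ t ht
        have h2' := mem_starSet.mp h2 t ht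
        rw [star_star] at h2'
        exact ⟨h1 t ht, h2'⟩
    · ext x
      rw [mem_starSet]
      have hps : ∀ s : S, s ∈ pAnn T → star s ∈ pAnn T := by
        intro s h t ht
        refine ⟨?_, (h t ht).1⟩
        rw [star_star]
        exact (h t ht).2
      constructor
      · intro h
        have := hps _ h
        rwa [star_star] at this
      · exact hps x
    · intro s h1 h2 t ht
      constructor
      · apply mulR hp
        rw [star_star, mul_assoc]
        exact (h1 t ht).2
      · apply mulR hp
        rw [mul_assoc]
        exact (h2 t ht).2
    · intro t h s t' ht'
      have h0 : t' * star t = 0 := by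
        have h1 := (h t' ht').1
        rw [star_mul, star_star] at h1
        apply mulR hp
        rw [star_star, mul_assoc]
        exact h1
      have key : ∀ x : S, t' * (star t * x) = 0 := by
        intro x
        rw [← mul_assoc, h0, zero_mul]
      constructor
      · have hst : star (star t * s * t) = star t * (star s * t) := by
          rw [star_mul, star_mul, star_star]
        rw [hst]
        exact key _
      · rw [mul_assoc (star t)]
        exact key _
    · rintro x ⟨a, ha, s, rfl⟩ ⟨b, hb, s', heq⟩
      intro t ht
      constructor
      · rw [heq, star_mul, ← mul_assoc, (hb t ht).1, zero_mul]
      · rw [← mul_assoc, (ha t ht).2, zero_mul]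
    · intro a ha b hb t ht
      constructor
      · rw [star_mul, ← mul_assoc, (hb t ht).1, zero_mul]
      · rw [← mul_assoc, (ha t ht).2, zero_mul]
  -- (4)
  · ext s
    constructor
    · intro h t ht
      exact h t fun t' ht' => (ht t' ht').1
    · intro h t ht
      have hm : star t * t ∈ pAnn T := by
        intro t' ht'
        constructor
        · rw [star_mul, star_star, ← mul_assoc, ht t' ht', zero_mul]
        · rw [← mul_assoc, ht t' ht', zero_mul]
      exact mulL hp (h _ hm)
  -- (5)
  · intro hT
    constructor
    · ext s
      constructor
      · intro hs t ht
        constructor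
        · apply mulR hp
          rw [star_star]
          exact hs t ht (star s)
        · apply mulR hp
          apply mulR hp
          rw [star_star]
          simpa only [mul_assoc] using hs t ht (s * star s)
      · intro hs t ht u
        exact (hs (t * u) (hT t ht u)).2
    · ext s
      constructor
      · intro hs t ht
        exact (hs t ht).1
      · intro hs t ht
        refine ⟨hs t ht, ?_⟩
        apply mulR hp
        exact hs (t * s) (hT t ht s)

end Stmt3
end

section
/- Let S be a proper *-semigroup. Then: (i) each of P(S)^L, P(S)^⊥ and P(S)^∇ is closed under arbitrary intersections; (ii) the map T ↦ T ∩ T* is an inclusion-preserving bijection from P(S)^L onto P(S)^⊥ with inverse T ↦ √T, and it satisfies T^L ∩ (T^L)* = (T ∩ T*)^⊥ for every T ∈ P(S)^L; (iii) P(S)^∇ = P(S)^L ∩ P(S)^⊥ = {T ∈ P(S)^L : T = T*} = {T ∈ P(S)^⊥ : S T ⊆ T}. -/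
/-!
`T^L`, `T^⊥` and `T^∇` are upper polars of the relations `t s* = 0`, `t s* = 0 ∧ t s = 0` and
`∀ u, t u s = 0`, so each family of annihilators is closed under intersections.

Properness gives two cancellation laws, `t* t x = 0 → t x = 0` and `x t* t = 0 → x t* = 0`.
They yield `√(W^⊥) = W^L`, which together with `W^⊥ = W^L ∩ (W^L)*` is the bijection of (ii),
and they make `T^∇` closed under `*`, whence `T^∇ = (T S)^L = (T S)^⊥`. Conversely, `V^L` is always a
left ideal and `W^⊥` is always `*`-closed; a set of either kind that is both is annihilated by
`V S` resp. `W S`, hence equals `V^∇` resp. `W^∇`.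
-/

namespace Stmt4

/-- `T* = {t* : t ∈ T}`. -/
def starSet {S : Type*} [Star S] (T : Set S) : Set S := star '' T

/-- `√T = {s : s* s ∈ T}`. -/
def sqrtS {S : Type*} [Mul S] [Star S] (T : Set S) : Set S := {s | star s * s ∈ T}

/-- The left annihilator `T^L`. -/
def lAnn {S : Type*} [Mul S] [Star S] [Zero S] (T : Set S) : Set S :=
  {s | ∀ t ∈ T, t * star s = 0}

/-- The *-annihilator `T^⊥`. -/
def pAnn {S : Type*} [Mul S] [Star S] [Zero S] (T : Set S) : Set S :=
  {s | ∀ t ∈ T, t * star s = 0 ∧ t * s = 0}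

/-- The annihilator ideal `T^∇`. -/
def nAnn {S : Type*} [Mul S] [Star S] [Zero S] (T : Set S) : Set S :=
  {s | ∀ t ∈ T, ∀ u : S, t * u * s = 0}

/-- `P(S)^L = {T^L : T ⊆ S}`. -/
def PL (S : Type*) [Mul S] [Star S] [Zero S] : Set (Set S) := {A | ∃ T : Set S, A = lAnn T}

/-- `P(S)^⊥ = {T^⊥ : T ⊆ S}`. -/
def Pperp (S : Type*) [Mul S] [Star S] [Zero S] : Set (Set S) := {A | ∃ T : Set S, A = pAnn T}

/-- `P(S)^∇ = {T^∇ : T ⊆ S}`. -/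
def Pnabla (S : Type*) [Mul S] [Star S] [Zero S] : Set (Set S) := {A | ∃ T : Set S, A = nAnn T}

open Set Order Pointwise

theorem sInter_mem_of_subset_upperPolars {α β : Type*} {r : α → β → Prop} {𝒜 : Set (Set β)}
    (h𝒜 : 𝒜 ⊆ {A | ∃ T, A = upperPolar r T}) : ⋂₀ 𝒜 ∈ {A | ∃ T, A = upperPolar r T} := by
  have hint : IsIntent r (⋂₀ 𝒜) := by
    rw [sInter_eq_biInter]
    exact IsIntent.iInter₂ _ fun A hA => (h𝒜 hA).imp fun _ => Eq.symm
  exact hint.imp fun _ => Eq.symm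

theorem mem_starSet {S : Type*} [InvolutiveStar S] {T : Set S} {s : S} :
    s ∈ starSet T ↔ star s ∈ T := by
  rw [starSet, image_star]
  rfl

section InvolutiveStar

variable {S : Type*} [Mul S] [Zero S] [InvolutiveStar S] {W : Set S}

theorem pAnn_eq_lAnn_inter_starSet (W : Set S) : pAnn W = lAnn W ∩ starSet (lAnn W) := by
  ext s
  simp only [pAnn, lAnn, mem_inter_iff, mem_starSet, mem_ofPred_eq, star_star, forall_and]

theorem pAnn_subset_lAnn : pAnn W ⊆ lAnn W := fun _ hs t ht => (hs t ht).1

theorem starSet_pAnn (W : Set S) : starSet (pAnn W) = pAnn W := by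
  ext s
  simp only [pAnn, mem_starSet, mem_ofPred_eq, star_star, and_comm]

end InvolutiveStar

def IsProperStar (S : Type*) [Mul S] [Star S] [Zero S] : Prop :=
  ∀ s : S, star s * s = 0 → s = 0

section ProperStar

variable {S : Type*} [SemigroupWithZero S] [StarMul S] {T V W : Set S} {s : S}

namespace IsProperStar

theorem star_zero (hp : IsProperStar S) : star (0 : S) = 0 :=
  hp _ (by rw [star_star, zero_mul])

theorem eq_zero_of_mul_star_self (hp : IsProperStar S) {x : S} (h : x * star x = 0) : x = 0 := by
  simpa [hp.star_zero] using congrArg star (hp (star x) (by rwa [star_star]))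

theorem mul_eq_zero_of_star_mul_self_mul (hp : IsProperStar S) {t x : S}
    (h : star t * t * x = 0) : t * x = 0 :=
  hp _ (by rw [star_mul, mul_assoc, ← mul_assoc (star t), h, mul_zero])

theorem mul_star_eq_zero_of_mul_star_mul (hp : IsProperStar S) {x t : S}
    (h : x * star t * t = 0) : x * star t = 0 :=
  hp.eq_zero_of_mul_star_self (by rw [star_mul, star_star, ← mul_assoc, h, zero_mul])

end IsProperStar

theorem mul_mem_lAnn (hs : s ∈ lAnn V) (u : S) : u * s ∈ lAnn V := fun t ht => by
  rw [star_mul, ← mul_assoc, hs t ht, zero_mul]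

theorem mul_mem_nAnn (hs : s ∈ nAnn T) (u : S) : u * s ∈ nAnn T := fun t ht v => by
  rw [← mul_assoc, mul_assoc t, hs t ht]

theorem sqrtS_pAnn (hp : IsProperStar S) (W : Set S) : sqrtS (pAnn W) = lAnn W := by
  ext s
  constructor
  · intro hs t ht
    exact hp.mul_star_eq_zero_of_mul_star_mul (by simpa [mul_assoc] using (hs t ht).2)
  · intro hs t ht
    have h : t * (star s * s) = 0 := by rw [← mul_assoc, hs t ht, zero_mul]
    exact ⟨by rwa [star_mul, star_star], h⟩

theorem pAnn_subset_pAnn_of_subset_sqrtS (hp : IsProperStar S) {U : Set S}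
    (h : T ⊆ sqrtS U) : pAnn U ⊆ pAnn T := fun _ hs _ ht =>
  have ⟨h₁, h₂⟩ := hs _ (h ht)
  ⟨hp.mul_eq_zero_of_star_mul_self_mul h₁, hp.mul_eq_zero_of_star_mul_self_mul h₂⟩

theorem pAnn_pAnn (hp : IsProperStar S) (V : Set S) : pAnn (pAnn V) = pAnn (lAnn V) :=
  (pAnn_subset_pAnn_of_subset_sqrtS hp (sqrtS_pAnn hp V).ge).antisymm
    fun _ hs t ht => hs t (pAnn_subset_lAnn ht)

theorem star_mem_nAnn (hp : IsProperStar S) (hs : s ∈ nAnn T) : star s ∈ nAnn T :=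
  fun t ht u => hp.eq_zero_of_mul_star_self <|
    calc t * u * star s * star (t * u * star s) = t * (u * star s) * s * (star u * star t) := by
          simp only [star_mul, star_star, mul_assoc]
      _ = 0 := by rw [hs t ht, zero_mul]

theorem starSet_nAnn (hp : IsProperStar S) (T : Set S) : starSet (nAnn T) = nAnn T := by
  ext s
  rw [mem_starSet]
  exact ⟨fun h => by simpa using star_mem_nAnn hp h, star_mem_nAnn hp⟩

theorem nAnn_eq_lAnn_mul_univ (hp : IsProperStar S) (T : Set S) : nAnn T = lAnn (T * univ) := by
  ext s
  constructor
  · rintro hs _ ⟨t, ht, u, -, rfl⟩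
    exact star_mem_nAnn hp hs t ht u
  · intro hs
    have hs' : star s ∈ nAnn T := fun t ht u => hs (t * u) ⟨t, ht, u, trivial, rfl⟩
    simpa using star_mem_nAnn hp hs'

theorem nAnn_eq_pAnn_mul_univ (hp : IsProperStar S) (T : Set S) : nAnn T = pAnn (T * univ) := by
  rw [pAnn_eq_lAnn_inter_starSet, ← nAnn_eq_lAnn_mul_univ hp, starSet_nAnn hp, inter_self]

theorem nAnn_subset_pAnn (hp : IsProperStar S) : nAnn T ⊆ pAnn T := fun s hs t ht =>
  ⟨hp.mul_star_eq_zero_of_mul_star_mul (hs t ht (star s)),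
    by simpa using hp.mul_star_eq_zero_of_mul_star_mul (star_mem_nAnn hp hs t ht (star (star s)))⟩

theorem lAnn_eq_nAnn_of_starSet_eq (hp : IsProperStar S) (h : starSet (lAnn V) = lAnn V) :
    lAnn V = nAnn V := by
  refine Subset.antisymm (fun s hs t ht u => ?_) ((nAnn_subset_pAnn hp).trans pAnn_subset_lAnn)
  have hus : u * s ∈ starSet (lAnn V) := h.symm ▸ mul_mem_lAnn hs u
  simpa [mul_assoc] using mem_starSet.1 hus t ht

theorem pAnn_eq_nAnn_of_mul_mem (hp : IsProperStar S) (h : ∀ u : S, ∀ s ∈ pAnn W, u * s ∈ pAnn W) :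
    pAnn W = nAnn W :=
  Subset.antisymm (fun s hs t ht u => by simpa [mul_assoc] using (h u s hs t ht).2)
    (nAnn_subset_pAnn hp)

end ProperStar

/-- Let `S` be a proper *-semigroup. Then
(i) `P(S)^L`, `P(S)^⊥` and `P(S)^∇` are closed under arbitrary intersections;
(ii) `T ↦ T ∩ T*` is an inclusion-preserving bijection from `P(S)^L` onto `P(S)^⊥`
with inverse `T ↦ √T`, satisfying `T^L ∩ (T^L)* = (T ∩ T*)^⊥` for all `T ∈ P(S)^L`;
(iii) `P(S)^∇ = P(S)^L ∩ P(S)^⊥ = {T ∈ P(S)^L : T = T*} = {T ∈ P(S)^⊥ : S T ⊆ T}`. -/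
theorem stmt_4 {S : Type*} [SemigroupWithZero S] [StarMul S]
    (hproper : ∀ s : S, star s * s = 0 → s = 0) :
    -- (i) closure under arbitrary intersections
    ((∀ 𝒜 : Set (Set S), 𝒜 ⊆ PL S → ⋂₀ 𝒜 ∈ PL S) ∧
     (∀ 𝒜 : Set (Set S), 𝒜 ⊆ Pperp S → ⋂₀ 𝒜 ∈ Pperp S) ∧
     (∀ 𝒜 : Set (Set S), 𝒜 ⊆ Pnabla S → ⋂₀ 𝒜 ∈ Pnabla S)) ∧
    -- (ii) the mutually inverse inclusion-preserving bijections
    ((∀ T ∈ PL S, T ∩ starSet T ∈ Pperp S ∧ sqrtS (T ∩ starSet T) = T ∧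
        lAnn T ∩ starSet (lAnn T) = pAnn (T ∩ starSet T)) ∧
     (∀ U ∈ Pperp S, sqrtS U ∈ PL S ∧ sqrtS U ∩ starSet (sqrtS U) = U) ∧
     (∀ T T' : Set S, T ∈ PL S → T' ∈ PL S → T ⊆ T' → T ∩ starSet T ⊆ T' ∩ starSet T') ∧
     (∀ U U' : Set S, U ∈ Pperp S → U' ∈ Pperp S → U ⊆ U' → sqrtS U ⊆ sqrtS U')) ∧
    -- (iii)
    (Pnabla S = PL S ∩ Pperp S ∧
     Pnabla S = {T ∈ PL S | starSet T = T} ∧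
     Pnabla S = {T ∈ Pperp S | ∀ s : S, ∀ t ∈ T, s * t ∈ T}) := by
  have nAnn_mem_PL (T : Set S) : nAnn T ∈ PL S := ⟨_, nAnn_eq_lAnn_mul_univ hproper T⟩
  have nAnn_mem_Pperp (T : Set S) : nAnn T ∈ Pperp S := ⟨_, nAnn_eq_pAnn_mul_univ hproper T⟩
  refine ⟨⟨fun _ => sInter_mem_of_subset_upperPolars, fun _ => sInter_mem_of_subset_upperPolars,
    fun _ => sInter_mem_of_subset_upperPolars⟩, ⟨?_, ?_, ?_, fun _ _ _ _ h _ hs => h hs⟩, ?_, ?_, ?_⟩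
  · rintro _ ⟨V, rfl⟩
    rw [← pAnn_eq_lAnn_inter_starSet, ← pAnn_eq_lAnn_inter_starSet, pAnn_pAnn hproper]
    exact ⟨⟨V, rfl⟩, sqrtS_pAnn hproper V, rfl⟩
  · rintro _ ⟨W, rfl⟩
    rw [sqrtS_pAnn hproper, ← pAnn_eq_lAnn_inter_starSet]
    exact ⟨⟨W, rfl⟩, rfl⟩
  · exact fun _ _ _ _ h => inter_subset_inter h (image_mono h)
  · refine Subset.antisymm ?_ ?_
    · rintro _ ⟨T, rfl⟩
      exact ⟨nAnn_mem_PL T, nAnn_mem_Pperp T⟩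
    · rintro _ ⟨⟨V, rfl⟩, ⟨W, hW⟩⟩
      exact ⟨V, lAnn_eq_nAnn_of_starSet_eq hproper (hW ▸ starSet_pAnn W)⟩
  · refine Subset.antisymm ?_ ?_
    · rintro _ ⟨T, rfl⟩
      exact ⟨nAnn_mem_PL T, starSet_nAnn hproper T⟩
    · rintro _ ⟨⟨V, rfl⟩, hV⟩
      exact ⟨V, lAnn_eq_nAnn_of_starSet_eq hproper hV⟩
  · refine Subset.antisymm ?_ ?_
    · rintro _ ⟨T, rfl⟩
      exact ⟨nAnn_mem_Pperp T, fun u _ ht => mul_mem_nAnn ht u⟩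
    · rintro _ ⟨⟨W, rfl⟩, hW⟩
      exact ⟨W, pAnn_eq_nAnn_of_mul_mem hproper hW⟩

end Stmt4
end

section
/- Let S be a proper *-semigroup, let A be a bi-hereditary *-subsemigroup of S, and let I be an ideal of S. Then A^L = (A ∩ I)^L ∩ (A ∩ I^L)^L and A^⊥ = (A ∩ I)^⊥ ∩ (A ∩ I^⊥)^⊥. -/
namespace Stmt5

/-- The set `S₊ = {t* t : t ∈ S}` of positive elements. -/
def Pos (S : Type*) [Mul S] [Star S] : Set S := {x | ∃ t : S, x = star t * t}

/-- `T* = {t* : t ∈ T}`. -/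
def starSet {S : Type*} [Star S] (T : Set S) : Set S := star '' T

/-- The left annihilator `T^L`. -/
def lAnn {S : Type*} [Mul S] [Star S] [Zero S] (T : Set S) : Set S :=
  {s | ∀ t ∈ T, t * star s = 0}

/-- The *-annihilator `T^⊥`. -/
def pAnn {S : Type*} [Mul S] [Star S] [Zero S] (T : Set S) : Set S :=
  {s | ∀ t ∈ T, t * star s = 0 ∧ t * s = 0}

lemma core {S : Type*} [SemigroupWithZero S] [StarMul S]
    (hproper : ∀ s : S, star s * s = 0 → s = 0) (A I J : Set S)
    (hA : ∀ a ∈ A, star a ∈ A)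
    (hAmul : ∀ a ∈ A, ∀ b ∈ A, a * b ∈ A)
    (hAbiher : ∀ t ∈ A ∩ Pos S, ∀ p ∈ Pos S, t * p * t ∈ A)
    (hIleft : ∀ x : S, ∀ t ∈ I, x * t ∈ I) (hIright : ∀ t ∈ I, ∀ x : S, t * x ∈ I)
    (s : S)
    (h1 : ∀ a ∈ A ∩ I, a * star s = 0)
    (h2 : ∀ a ∈ A ∩ J, a * star s = 0)
    (hJ : ∀ f : S, (∀ t ∈ I, t * star f = 0) → (∀ t ∈ I, t * f = 0) → f ∈ J) :
    ∀ a ∈ A, a * star s = 0 := by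
  intro a ha
  set b := star a * a with hb
  have hbA : b ∈ A := hAmul _ (hA a ha) _ ha
  have hbP : b ∈ Pos S := ⟨a, rfl⟩
  have hbstar : star b = b := by simp [hb]
  -- step 1: ∀ t ∈ I, t * (b * star s) = 0
  have step1 : ∀ t ∈ I, t * (b * star s) = 0 := by
    intro t ht
    have hdA : b * (star t * t) * b ∈ A := hAbiher b ⟨hbA, hbP⟩ _ ⟨t, rfl⟩
    have hdI : b * (star t * t) * b ∈ I := by
      have h := hIleft (b * star t) _ (hIright t ht b)
      have e : b * star t * (t * b) = b * (star t * t) * b := by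
        simp [mul_assoc]
      rwa [e] at h
    have hd0 : (b * (star t * t) * b) * star s = 0 := h1 _ ⟨hdA, hdI⟩
    apply hproper
    have e : star (t * (b * star s)) * (t * (b * star s))
        = s * ((b * (star t * t) * b) * star s) := by
      simp [hb, mul_assoc]
    rw [e, hd0, mul_zero]
  -- the element f = b (s* s) b lies in A ∩ J
  have hfA : b * (star s * s) * b ∈ A := hAbiher b ⟨hbA, hbP⟩ _ ⟨s, rfl⟩
  have hfstar : star (b * (star s * s) * b) = b * (star s * s) * b := by
    simp [hb, mul_assoc]
  have hfann : ∀ t ∈ I, t * (b * (star s * s) * b) = 0 := by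
    intro t ht
    have e : t * (b * (star s * s) * b) = t * (b * star s) * (s * b) := by
      simp [mul_assoc]
    rw [e, step1 t ht, zero_mul]
  have hfJ : b * (star s * s) * b ∈ J :=
    hJ _ (fun t ht => by rw [hfstar]; exact hfann t ht) hfann
  have hf0 : (b * (star s * s) * b) * star s = 0 := h2 _ ⟨hfA, hfJ⟩
  have hy : s * (b * star s) = 0 := by
    apply hproper
    have e : star (s * (b * star s)) * (s * (b * star s))
        = s * ((b * (star s * s) * b) * star s) := by
      simp [hb, mul_assoc]
    rw [e, hf0, mul_zero]
  apply hproper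
  have e : star (a * star s) * (a * star s) = s * (b * star s) := by
    simp [hb, mul_assoc]
  rw [e, hy]

/-- Let `S` be a proper *-semigroup, `A` a bi-hereditary
*-subsemigroup of `S`, and `I` an ideal of `S`.  Then
`A^L = (A ∩ I)^L ∩ (A ∩ I^L)^L` and `A^⊥ = (A ∩ I)^⊥ ∩ (A ∩ I^⊥)^⊥`. -/
theorem stmt_5 {S : Type*} [SemigroupWithZero S] [StarMul S]
    (hproper : ∀ s : S, star s * s = 0 → s = 0) (A I : Set S)
    (hAstar : starSet A = A) (hAmul : ∀ a ∈ A, ∀ b ∈ A, a * b ∈ A)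
    (hAbiher : ∀ t ∈ A ∩ Pos S, ∀ s ∈ Pos S, t * s * t ∈ A)
    (hIleft : ∀ s : S, ∀ t ∈ I, s * t ∈ I) (hIright : ∀ t ∈ I, ∀ s : S, t * s ∈ I) :
    lAnn A = lAnn (A ∩ I) ∩ lAnn (A ∩ lAnn I) ∧
    pAnn A = pAnn (A ∩ I) ∩ pAnn (A ∩ pAnn I) := by
  have hA : ∀ a ∈ A, star a ∈ A := fun a ha => by
    rw [← hAstar]; exact ⟨a, ha, rfl⟩
  constructor
  · apply Set.Subset.antisymm
    · intro s hs
      exact ⟨fun a ha => hs a ha.1, fun a ha => hs a ha.1⟩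
    · intro s hs a ha
      exact core hproper A I (lAnn I) hA hAmul hAbiher hIleft hIright s
        hs.1 hs.2 (fun f hf _ => hf) a ha
  · apply Set.Subset.antisymm
    · intro s hs
      exact ⟨fun a ha => hs a ha.1, fun a ha => hs a ha.1⟩
    · intro s hs a ha
      constructor
      · exact core hproper A I (pAnn I) hA hAmul hAbiher hIleft hIright s
          (fun a ha => (hs.1 a ha).1) (fun a ha => (hs.2 a ha).1)
          (fun f hf hf' t ht => ⟨hf t ht, hf' t ht⟩) a ha
      · have h := core hproper A I (pAnn I) hA hAmul hAbiher hIleft hIright (star s)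
          (fun a ha => by simpa using (hs.1 a ha).2)
          (fun a ha => by simpa using (hs.2 a ha).2)
          (fun f hf hf' t ht => ⟨hf t ht, hf' t ht⟩) a ha
        simpa using h

end Stmt5
end

section
/- Let S be a proper *-semigroup. For every A ∈ P(S)^⊥ and every I ∈ P(S)^∇, A = ((A ∩ I)^⊥ ∩ (A ∩ I^⊥)^⊥)^⊥, i.e. A = (A ∩ I) ∨ (A ∩ I^⊥). (In particular every element of P(S)^∇ lies in the centre of the ortholattice P(S)^⊥.) -/
namespace Stmt6

/-- The *-annihilator `T^⊥`. -/
def pAnn {S : Type*} [Mul S] [Star S] [Zero S] (T : Set S) : Set S :=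
  {s | ∀ t ∈ T, t * star s = 0 ∧ t * s = 0}

/-- The annihilator ideal `T^∇`. -/
def nAnn {S : Type*} [Mul S] [Star S] [Zero S] (T : Set S) : Set S :=
  {s | ∀ t ∈ T, ∀ u : S, t * u * s = 0}

/-- `P(S)^⊥ = {T^⊥ : T ⊆ S}`. -/
def Pperp (S : Type*) [Mul S] [Star S] [Zero S] : Set (Set S) := {A | ∃ T : Set S, A = pAnn T}

/-- `P(S)^∇ = {T^∇ : T ⊆ S}`. -/
def Pnabla (S : Type*) [Mul S] [Star S] [Zero S] : Set (Set S) := {A | ∃ T : Set S, A = nAnn T}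

section aux

variable {S : Type*} [SemigroupWithZero S] [StarMul S]

lemma star_zero_of_proper (hp : ∀ s : S, star s * s = 0 → s = 0) : star (0 : S) = 0 := by
  apply hp
  rw [star_star, zero_mul]

lemma proper' (hp : ∀ s : S, star s * s = 0 → s = 0) (x : S) (h : x * star x = 0) : x = 0 := by
  have h1 : star x = 0 := hp (star x) (by rwa [star_star])
  calc x = star (star x) := (star_star x).symm
  _ = star 0 := by rw [h1]
  _ = 0 := star_zero_of_proper hp

lemma mem_pAnn_star {T : Set S} {x : S} (h : x ∈ pAnn T) : star x ∈ pAnn T := by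
  intro t ht
  obtain ⟨h1, h2⟩ := h t ht
  exact ⟨by rwa [star_star], h1⟩

lemma pAnn_anti {T U : Set S} (h : T ⊆ U) : pAnn U ⊆ pAnn T :=
  fun s hs t ht => hs t (h ht)

lemma pAnn_triple {T : Set S} (hp : ∀ s : S, star s * s = 0 → s = 0) :
    pAnn (pAnn (pAnn T)) ⊆ pAnn T := by
  intro x hx t ht
  have hmem : star t * t ∈ pAnn (pAnn T) := by
    intro s hs
    have h1 : t * star s = 0 := (hs t ht).1
    have h2 : s * star t = 0 := by
      have h3 := congrArg star h1
      rw [star_mul, star_star, star_zero_of_proper hp] at h3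
      exact h3
    constructor
    · rw [star_mul, star_star, ← mul_assoc, h2, zero_mul]
    · rw [← mul_assoc, h2, zero_mul]
  obtain ⟨hx1, hx2⟩ := hx _ hmem
  constructor
  · apply hp
    rw [star_mul, star_star, mul_assoc, ← mul_assoc (star t), hx1, mul_zero]
  · apply hp
    rw [star_mul, mul_assoc, ← mul_assoc (star t), hx2, mul_zero]

end aux

/-- Let `S` be a proper *-semigroup.  For every `A ∈ P(S)^⊥` and
`I ∈ P(S)^∇`, `A = ((A ∩ I)^⊥ ∩ (A ∩ I^⊥)^⊥)^⊥`, i.e. `A = (A ∩ I) ∨ (A ∩ I^⊥)`. -/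
theorem stmt_6 {S : Type*} [SemigroupWithZero S] [StarMul S]
    (hproper : ∀ s : S, star s * s = 0 → s = 0)
    (A I : Set S) (hA : A ∈ Pperp S) (hI : I ∈ Pnabla S) :
    A = pAnn (pAnn (A ∩ I) ∩ pAnn (A ∩ pAnn I)) := by
  obtain ⟨T₀, rfl⟩ := hA
  obtain ⟨T₁, rfl⟩ := hI
  -- `I = nAnn T₁` is a two-sided ideal, closed under star
  have hIdealL : ∀ x ∈ nAnn T₁, ∀ u : S, u * x ∈ nAnn T₁ := by
    intro x hx u t ht v
    have h := hx t ht (v * u)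
    simp only [mul_assoc] at h ⊢
    exact h
  have hIdealR : ∀ x ∈ nAnn T₁, ∀ u : S, x * u ∈ nAnn T₁ := by
    intro x hx u t ht v
    have h := hx t ht v
    rw [← mul_assoc, h, zero_mul]
  have hIstar : ∀ x ∈ nAnn T₁, star x ∈ nAnn T₁ := by
    intro x hx t ht u
    apply proper' hproper
    have h : t * u * (star x * x) = 0 := hIdealL x hx (star x) t ht u
    have h2 : t * u * (star x * x) * (star u * star t) = 0 := by rw [h, zero_mul]
    simp only [star_mul, star_star, mul_assoc] at h2 ⊢
    exact h2
  -- the main annihilation lemma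
  have main : ∀ s, s ∈ pAnn (pAnn T₀ ∩ nAnn T₁) → s ∈ pAnn (pAnn T₀ ∩ pAnn (nAnn T₁)) →
      ∀ b ∈ pAnn T₀, b * star s = 0 := by
    intro s hsX hsY
    have stepA : ∀ t ∈ nAnn T₁, ∀ b ∈ pAnn T₀, t * (b * star s) = 0 := by
      intro t ht b hb
      have hcA : star b * (star t * (t * b)) ∈ pAnn T₀ := by
        intro t₀ ht₀
        have h0 : t₀ * star b = 0 := (hb t₀ ht₀).1
        have h1 : t₀ * star b * (star t * (t * b)) = 0 := by rw [h0, zero_mul]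
        constructor
        · simp only [star_mul, star_star, mul_assoc] at h1 ⊢
          exact h1
        · simp only [mul_assoc] at h1 ⊢
          exact h1
      have hcI : star b * (star t * (t * b)) ∈ nAnn T₁ :=
        hIdealL _ (hIdealR _ (hIstar t ht) (t * b)) (star b)
      have hc1 : (star b * (star t * (t * b))) * star s = 0 := (hsX _ ⟨hcA, hcI⟩).1
      apply hproper
      have h2 : s * ((star b * (star t * (t * b))) * star s) = 0 := by rw [hc1, mul_zero]
      simp only [star_mul, star_star, mul_assoc] at h2 ⊢
      exact h2
    have stepB : ∀ y ∈ pAnn (nAnn T₁), ∀ b ∈ pAnn T₀, y * (b * star s) = 0 := by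
      intro y hy b hb
      have hcA : star b * (star y * (y * b)) ∈ pAnn T₀ := by
        intro t₀ ht₀
        have h0 : t₀ * star b = 0 := (hb t₀ ht₀).1
        have h1 : t₀ * star b * (star y * (y * b)) = 0 := by rw [h0, zero_mul]
        constructor
        · simp only [star_mul, star_star, mul_assoc] at h1 ⊢
          exact h1
        · simp only [mul_assoc] at h1 ⊢
          exact h1
      have hcP : star b * (star y * (y * b)) ∈ pAnn (nAnn T₁) := by
        intro t₁ ht₁
        have hm : t₁ * star b ∈ nAnn T₁ := hIdealR t₁ ht₁ (star b)
        have h0 : (t₁ * star b) * star y = 0 := (hy _ hm).1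
        have h1 : (t₁ * star b) * star y * (y * b) = 0 := by rw [h0, zero_mul]
        constructor
        · simp only [star_mul, star_star, mul_assoc] at h1 ⊢
          exact h1
        · simp only [mul_assoc] at h1 ⊢
          exact h1
      have hc1 : (star b * (star y * (y * b))) * star s = 0 := (hsY _ ⟨hcA, hcP⟩).1
      apply hproper
      have h2 : s * ((star b * (star y * (y * b))) * star s) = 0 := by rw [hc1, mul_zero]
      simp only [star_mul, star_star, mul_assoc] at h2 ⊢
      exact h2
    intro b hb
    have hrr : (b * star s) * star (b * star s) ∈ pAnn (nAnn T₁) := by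
      intro t ht
      have h1 : t * (b * star s) = 0 := stepA t ht b hb
      have h2 : t * (b * star s) * star (b * star s) = 0 := by rw [h1, zero_mul]
      constructor
      · simp only [star_mul, star_star, mul_assoc] at h2 ⊢
        exact h2
      · simp only [mul_assoc] at h2 ⊢
        exact h2
    have hkey : ((b * star s) * star (b * star s)) * (b * star s) = 0 :=
      stepB _ hrr b hb
    have h4 : star (b * star s) * (b * star s) = 0 := by
      apply hproper
      have h5 : star (b * star s) * (((b * star s) * star (b * star s)) * (b * star s)) = 0 := by
        rw [hkey, mul_zero]
      simp only [star_mul, star_star, mul_assoc] at h5 ⊢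
      exact h5
    exact hproper _ h4
  apply Set.Subset.antisymm
  · -- hard direction
    intro a ha s hs
    obtain ⟨hsX, hsY⟩ := hs
    constructor
    · have h1 : a * star s = 0 := main s hsX hsY a ha
      have h2 := congrArg star h1
      rw [star_mul, star_star, star_zero_of_proper hproper] at h2
      exact h2
    · have h1 : star a * star s = 0 := main s hsX hsY (star a) (mem_pAnn_star ha)
      have h2 := congrArg star h1
      rw [star_mul, star_star, star_star, star_zero_of_proper hproper] at h2
      exact h2
  · -- easy direction
    have h1 : pAnn (pAnn T₀) ⊆ pAnn (pAnn T₀ ∩ nAnn T₁) :=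
      pAnn_anti Set.inter_subset_left
    have h2 : pAnn (pAnn T₀) ⊆ pAnn (pAnn T₀ ∩ pAnn (nAnn T₁)) :=
      pAnn_anti Set.inter_subset_left
    have h3 : pAnn (pAnn T₀) ⊆ pAnn (pAnn T₀ ∩ nAnn T₁) ∩ pAnn (pAnn T₀ ∩ pAnn (nAnn T₁)) :=
      Set.subset_inter h1 h2
    exact (pAnn_anti h3).trans (pAnn_triple hproper)

end Stmt6
end

section
/- Let S be a proper *-semigroup and let A be a self-adjoint bi-ideal of S (A = A*, A A ⊆ A and A S A ⊆ A). Then the maps J ↦ J^∇∇ and I ↦ A ∩ I are mutually inverse inclusion-preserving bijections between P(A)^{∇_A} and {I ∈ P(S)^∇ : I ⊆ A^∇∇}; moreover (A ∩ I)^{∇_A} = A ∩ I^∇ for every I ∈ P(S)^∇ (so the bijection preserves the orthocomplements). -/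
namespace Stmt7

/-- `T* = {t* : t ∈ T}`. -/
def starSet {S : Type*} [Star S] (T : Set S) : Set S := star '' T

/-- The annihilator ideal `T^∇ = {s : t u s = 0 for all t ∈ T, u ∈ S}`. -/
def nAnn {S : Type*} [Mul S] [Star S] [Zero S] (T : Set S) : Set S :=
  {s | ∀ t ∈ T, ∀ u : S, t * u * s = 0}

/-- `P(S)^∇ = {T^∇ : T ⊆ S}`. -/
def Pnabla (S : Type*) [Mul S] [Star S] [Zero S] : Set (Set S) := {A | ∃ T : Set S, A = nAnn T}

/-- The relative annihilator ideal `T^{∇_A} = {a ∈ A : t u a = 0 ∀ t ∈ T, u ∈ A}`. -/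
def nAnnIn {S : Type*} [Mul S] [Star S] [Zero S] (A T : Set S) : Set S :=
  {a | a ∈ A ∧ ∀ t ∈ T, ∀ u ∈ A, t * u * a = 0}

/-- `P(A)^{∇_A} = {T^{∇_A} : T ⊆ A}`. -/
def PnablaIn {S : Type*} [Mul S] [Star S] [Zero S] (A : Set S) : Set (Set S) :=
  {J | ∃ T : Set S, T ⊆ A ∧ J = nAnnIn A T}

section Helpers

variable {S : Type*} [SemigroupWithZero S] [StarMul S]

lemma selfZero (hproper : ∀ s : S, star s * s = 0 → s = 0)
    (z : S) (h : z * star z * z = 0) : z = 0 := by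
  apply hproper
  apply hproper
  calc star (star z * z) * (star z * z) = star z * (z * star z * z) := by
        simp only [star_mul, star_star, mul_assoc]
    _ = 0 := by rw [h, mul_zero]

lemma star_zero' (hproper : ∀ s : S, star s * s = 0 → s = 0) : star (0 : S) = 0 := by
  apply hproper
  rw [star_star, zero_mul]

lemma perp_starLeft (hproper : ∀ s : S, star s * s = 0 → s = 0)
    (B : Set S) (hBmul : ∀ a ∈ B, ∀ b ∈ B, a * b ∈ B) {t a : S}
    (hst : star t ∈ B) (h : ∀ u ∈ B, t * u * a = 0) :
    ∀ u ∈ B, star t * u * a = 0 := by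
  intro u hu
  apply hproper
  calc star (star t * u * a) * (star t * u * a)
      = (star a * star u) * (t * (star t * u) * a) := by
        simp only [star_mul, star_star, mul_assoc]
    _ = 0 := by rw [h _ (hBmul _ hst _ hu), mul_zero]

lemma perp_starBoth (hproper : ∀ s : S, star s * s = 0 → s = 0)
    (B : Set S) (hBstar : ∀ b ∈ B, star b ∈ B) {t a : S}
    (h : ∀ u ∈ B, t * u * a = 0) :
    ∀ u ∈ B, star a * u * star t = 0 := by
  intro u hu
  calc star a * u * star t = star (t * star u * a) := by
        simp only [star_mul, star_star, mul_assoc]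
    _ = 0 := by rw [h (star u) (hBstar u hu), star_zero' hproper]

lemma perp_symm (hproper : ∀ s : S, star s * s = 0 → s = 0)
    (B : Set S) (hBstar : ∀ b ∈ B, star b ∈ B) (hBmul : ∀ a ∈ B, ∀ b ∈ B, a * b ∈ B)
    {t a : S} (ht : t ∈ B) (ha : a ∈ B) (h : ∀ u ∈ B, t * u * a = 0) :
    ∀ u ∈ B, a * u * t = 0 := by
  have h1 := perp_starLeft hproper B hBmul (hBstar t ht) h
  have h2 := perp_starBoth hproper B hBstar h1
  simp only [star_star] at h2
  have h3 := perp_starLeft hproper B hBmul (t := star a) (a := t)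
    (by rw [star_star]; exact ha) h2
  simpa only [star_star] using h3

lemma perp_starRight (hproper : ∀ s : S, star s * s = 0 → s = 0)
    (B : Set S) (hBstar : ∀ b ∈ B, star b ∈ B) (hBmul : ∀ a ∈ B, ∀ b ∈ B, a * b ∈ B)
    {t a : S} (ht : t ∈ B) (ha : a ∈ B) (h : ∀ u ∈ B, t * u * a = 0) :
    ∀ u ∈ B, t * u * star a = 0 := by
  have h1 := perp_symm hproper B hBstar hBmul ht ha h
  have h2 := perp_starBoth hproper B hBstar h1
  have h3 := perp_starLeft hproper B hBmul (t := star t) (a := star a)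
    (by rw [star_star]; exact ht) h2
  simpa only [star_star] using h3

/-- Global symmetry of the orthogonality relation. -/
lemma gsymm (hproper : ∀ s : S, star s * s = 0 → s = 0)
    {t a : S} (h : ∀ u : S, t * u * a = 0) : ∀ u : S, a * u * t = 0 := fun u =>
  perp_symm hproper Set.univ (fun b _ => Set.mem_univ _) (fun b _ c _ => Set.mem_univ _)
    (Set.mem_univ t) (Set.mem_univ a) (fun v _ => h v) u (Set.mem_univ u)

lemma nAnn_antitone {T U : Set S} (h : T ⊆ U) : nAnn U ⊆ nAnn T :=
  fun s hs t ht u => hs t (h ht) u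

lemma nAnn_mul_left {T : Set S} {s : S} (hs : s ∈ nAnn T) (v : S) : v * s ∈ nAnn T := by
  intro t ht u
  calc t * u * (v * s) = t * (u * v) * s := by simp only [mul_assoc]
    _ = 0 := hs t ht (u * v)

lemma nAnn_mul_right {T : Set S} {s : S} (hs : s ∈ nAnn T) (v : S) : s * v ∈ nAnn T := by
  intro t ht u
  rw [← mul_assoc, hs t ht u, zero_mul]

lemma subset_nAnn_nAnn (hproper : ∀ s : S, star s * s = 0 → s = 0)
    (T : Set S) : T ⊆ nAnn (nAnn T) := by
  intro t ht k hk u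
  exact gsymm hproper (fun v => hk t ht v) u

lemma nAnn_nAnn_nAnn (hproper : ∀ s : S, star s * s = 0 → s = 0)
    (K : Set S) : nAnn (nAnn (nAnn K)) = nAnn K :=
  subset_antisymm (nAnn_antitone (subset_nAnn_nAnn hproper K))
    (subset_nAnn_nAnn hproper (nAnn K))

end Helpers

/-- Let `S` be a proper *-semigroup and `A` a self-adjoint bi-ideal
of `S` containing `0`.  Then `J ↦ J^∇∇` and `I ↦ A ∩ I` are mutually inverse
inclusion-preserving bijections between `P(A)^{∇_A}` and
`{I ∈ P(S)^∇ : I ⊆ A^∇∇}`; moreover `(A ∩ I)^{∇_A} = A ∩ I^∇` for every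
`I ∈ P(S)^∇`. -/
theorem stmt_7 {S : Type*} [SemigroupWithZero S] [StarMul S]
    (hproper : ∀ s : S, star s * s = 0 → s = 0) (A : Set S)
    (h0 : (0 : S) ∈ A) (hAstar : starSet A = A)
    (hAmul : ∀ a ∈ A, ∀ b ∈ A, a * b ∈ A)
    (hAbi : ∀ a ∈ A, ∀ s : S, ∀ b ∈ A, a * s * b ∈ A) :
    (∀ J ∈ PnablaIn A,
      nAnn (nAnn J) ∈ Pnabla S ∧ nAnn (nAnn J) ⊆ nAnn (nAnn A) ∧ A ∩ nAnn (nAnn J) = J) ∧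
    (∀ I ∈ Pnabla S, I ⊆ nAnn (nAnn A) →
      A ∩ I ∈ PnablaIn A ∧ nAnn (nAnn (A ∩ I)) = I) ∧
    (∀ J J' : Set S, J ∈ PnablaIn A → J' ∈ PnablaIn A → J ⊆ J' →
      nAnn (nAnn J) ⊆ nAnn (nAnn J')) ∧
    (∀ I I' : Set S, I ∈ Pnabla S → I' ∈ Pnabla S → I ⊆ I' → A ∩ I ⊆ A ∩ I') ∧
    (∀ I ∈ Pnabla S, nAnnIn A (A ∩ I) = A ∩ nAnn I) := by
  have hAst : ∀ a ∈ A, star a ∈ A := by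
    intro a ha
    have : star a ∈ starSet A := ⟨a, ha, rfl⟩
    rwa [hAstar] at this
  -- Relative annihilation implies global annihilation (within A).
  have lemL1 : ∀ T : Set S, T ⊆ A → ∀ a, a ∈ nAnnIn A T → ∀ t ∈ T, ∀ s : S, t * s * a = 0 := by
    intro T hTA a ha t ht s
    obtain ⟨haA, hperp⟩ := ha
    have hat : ∀ u ∈ A, a * u * t = 0 :=
      perp_symm hproper A hAst hAmul (hTA ht) haA (fun u hu => hperp t ht u hu)
    have hxA : t * s * a ∈ A := hAbi t (hTA ht) s a haA
    have hxx : ∀ u ∈ A, (t * s * a) * u * (t * s * a) = 0 := by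
      intro u hu
      calc (t * s * a) * u * (t * s * a) = t * (s * ((a * u * t) * (s * a))) := by
            simp only [mul_assoc]
        _ = 0 := by rw [hat u hu, zero_mul, mul_zero, mul_zero]
    exact selfZero hproper _ (hxx (star (t * s * a)) (hAst _ hxA))
  -- The key exchange lemma: `(A ∩ K^∇)^{∇_A} = A ∩ K^∇∇`.
  have lemE : ∀ K : Set S, nAnnIn A (A ∩ nAnn K) = A ∩ nAnn (nAnn K) := by
    intro K
    ext a
    constructor
    · rintro ⟨haA, hperp⟩
      refine ⟨haA, ?_⟩
      intro t ht s
      have hXA : star (t * s * a) * (t * s * a) ∈ A := by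
        have heq : star (t * s * a) * (t * s * a)
            = star a * (star s * (star t * t) * s) * a := by
          simp only [star_mul, star_star, mul_assoc]
        rw [heq]
        exact hAbi _ (hAst a haA) _ _ haA
      have hXK : star (t * s * a) * (t * s * a) ∈ nAnn K :=
        nAnn_mul_left (nAnn_mul_right (nAnn_mul_right ht s) a) (star (t * s * a))
      have hXa : ∀ u ∈ A, (star (t * s * a) * (t * s * a)) * u * a = 0 :=
        fun u hu => hperp _ ⟨hXA, hXK⟩ u hu
      have hXa' : ∀ u ∈ A, (star (t * s * a) * (t * s * a)) * u * star a = 0 :=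
        perp_starRight hproper A hAst hAmul hXA haA hXa
      have hXX : ∀ u ∈ A,
          (star (t * s * a) * (t * s * a)) * u * (star (t * s * a) * (t * s * a)) = 0 := by
        intro u hu
        calc (star (t * s * a) * (t * s * a)) * u * (star (t * s * a) * (t * s * a))
            = ((star (t * s * a) * (t * s * a)) * u * star a)
                * (star s * (star t * (t * (s * a)))) := by
              simp only [star_mul, star_star, mul_assoc]
          _ = 0 := by rw [hXa' u hu, zero_mul]
      have hX0 : star (t * s * a) * (t * s * a) = 0 :=
        selfZero hproper _ (hXX (star (star (t * s * a) * (t * s * a))) (hAst _ hXA))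
      exact hproper _ hX0
    · rintro ⟨haA, hann⟩
      exact ⟨haA, fun t ht u _ => hann t ht.2 u⟩
  -- Key vanishing lemma.
  have key0 : ∀ K : Set S, ∀ x : S, x ∈ nAnn K → x ∈ nAnn (A ∩ nAnn K) →
      x ∈ nAnn (nAnn A) → x = 0 := by
    intro K x hxK hx1 hx2
    have step1 : ∀ a ∈ A, ∀ u : S, a * u * x = 0 := by
      intro a haA u
      have hdA : (a * u * x) * star (a * u * x) ∈ A := by
        have heq : (a * u * x) * star (a * u * x)
            = a * (u * (x * star x) * star u) * star a := by
          simp only [star_mul, star_star, mul_assoc]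
        rw [heq]
        exact hAbi a haA _ _ (hAst a haA)
      have hdK : (a * u * x) * star (a * u * x) ∈ nAnn K := by
        exact nAnn_mul_right (nAnn_mul_left hxK (a * u)) (star (a * u * x))
      have hdx : ∀ v : S, ((a * u * x) * star (a * u * x)) * v * x = 0 :=
        fun v => hx1 _ ⟨hdA, hdK⟩ v
      have hdd : ∀ s' : S,
          ((a * u * x) * star (a * u * x)) * s' * ((a * u * x) * star (a * u * x)) = 0 := by
        intro s'
        calc ((a * u * x) * star (a * u * x)) * s' * ((a * u * x) * star (a * u * x))
            = (((a * u * x) * star (a * u * x)) * (s' * a * u) * x)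
                * (star x * (star u * star a)) := by
              simp only [star_mul, star_star, mul_assoc]
          _ = 0 := by rw [hdx (s' * a * u), zero_mul]
      have hd0 : (a * u * x) * star (a * u * x) = 0 :=
        selfZero hproper _ (hdd (star ((a * u * x) * star (a * u * x))))
      have hy' : star (a * u * x) = 0 := by
        apply hproper
        rw [star_star]
        exact hd0
      calc a * u * x = star (star (a * u * x)) := (star_star _).symm
        _ = 0 := by rw [hy', star_zero' hproper]
    have hxnA : x ∈ nAnn A := fun a ha u => step1 a ha u
    exact selfZero hproper x (hx2 x hxnA (star x))
  refine ⟨?_, ?_, ?_, ?_, ?_⟩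
  · -- Part 1
    rintro J ⟨T, hTA, rfl⟩
    refine ⟨⟨nAnn (nAnnIn A T), rfl⟩, ?_, ?_⟩
    · exact nAnn_antitone (nAnn_antitone (fun j hj => hj.1))
    · rw [← lemE (nAnnIn A T)]
      ext a
      constructor
      · rintro ⟨haA, hp⟩
        refine ⟨haA, fun t ht u hu => hp t ⟨hTA ht, ?_⟩ u hu⟩
        intro j hj v
        exact gsymm hproper (fun s => lemL1 T hTA j hj t ht s) v
      · rintro ⟨haA, hp⟩
        refine ⟨haA, fun t ht u hu => ?_⟩
        exact gsymm hproper (fun v => ht.2 a ⟨haA, hp⟩ v) u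
  · -- Part 2
    rintro I ⟨K, rfl⟩ hIA
    have htriple : nAnn (nAnn (nAnn K)) = nAnn K := nAnn_nAnn_nAnn hproper K
    constructor
    · refine ⟨A ∩ nAnn (nAnn K), Set.inter_subset_left, ?_⟩
      rw [lemE (nAnn K), htriple]
    · apply subset_antisymm
      · have h1 : nAnn (nAnn K) ⊆ nAnn (A ∩ nAnn K) :=
          nAnn_antitone Set.inter_subset_right
        have h2 := nAnn_antitone h1
        rw [htriple] at h2
        exact h2
      · intro x hx k hk u
        apply key0 K
        · exact nAnn_mul_left hx (k * u)
        · exact nAnn_mul_right (nAnn_mul_right hk u) x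
        · exact hIA (nAnn_mul_left hx (k * u))
  · -- Part 3
    intro J J' _ _ h
    exact nAnn_antitone (nAnn_antitone h)
  · -- Part 4
    intro I I' _ _ h x hx
    exact ⟨hx.1, h hx.2⟩
  · -- Part 5
    rintro I ⟨K, rfl⟩
    exact lemE K

end Stmt7
end

section
/- Let S be a proper *-semigroup and let A be a commutative bi-hereditary *-subsemigroup of S containing 0. Then P(A)^{⊥_A} = {A ∩ I : I ∈ P(S)^⊥}. -/
namespace Stmt8

/-- The set `S₊ = {t* t : t ∈ S}` of positive elements. -/
def Pos (S : Type*) [Mul S] [Star S] : Set S := {x | ∃ t : S, x = star t * t}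

/-- `T* = {t* : t ∈ T}`. -/
def starSet {S : Type*} [Star S] (T : Set S) : Set S := star '' T

/-- The *-annihilator `T^⊥`. -/
def pAnn {S : Type*} [Mul S] [Star S] [Zero S] (T : Set S) : Set S :=
  {s | ∀ t ∈ T, t * star s = 0 ∧ t * s = 0}

/-- `P(S)^⊥ = {T^⊥ : T ⊆ S}`. -/
def Pperp (S : Type*) [Mul S] [Star S] [Zero S] : Set (Set S) := {A | ∃ T : Set S, A = pAnn T}

/-- The relative *-annihilator `T^{⊥_A} = {a ∈ A : t a* = 0 and t a = 0 ∀ t ∈ T}`. -/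
def pAnnIn {S : Type*} [Mul S] [Star S] [Zero S] (A T : Set S) : Set S :=
  {a | a ∈ A ∧ ∀ t ∈ T, t * star a = 0 ∧ t * a = 0}

/-- `P(A)^{⊥_A} = {T^{⊥_A} : T ⊆ A}`. -/
def PperpIn {S : Type*} [Mul S] [Star S] [Zero S] (A : Set S) : Set (Set S) :=
  {J | ∃ T : Set S, T ⊆ A ∧ J = pAnnIn A T}

section Aux

variable {S : Type*} [SemigroupWithZero S] [StarMul S]

lemma star_zero' (hproper : ∀ s : S, star s * s = 0 → s = 0) : star (0 : S) = 0 := by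
  apply hproper
  rw [star_star, zero_mul]

/-- Cancellation: `s x x* = 0 → s x = 0` in a proper *-semigroup. -/
lemma cancel (hproper : ∀ s : S, star s * s = 0 → s = 0) (s x : S)
    (h : s * x * star x = 0) : s * x = 0 := by
  have h1 : (s * x) * star (s * x) = 0 := by
    rw [star_mul, ← mul_assoc, h, zero_mul]
  have h2 : star (s * x) = 0 := by
    apply hproper
    rwa [star_star]
  calc s * x = star (star (s * x)) := (star_star _).symm
    _ = 0 := by rw [h2, star_zero' hproper]

/-- Key lemma: if `q = a₀ a₀*`, `e = q (t* t) q`, `q` commutes with `e`,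
and `e a₀ = 0`, then `t a₀ = 0`. -/
lemma key (hproper : ∀ s : S, star s * s = 0 → s = 0) (t a0 : S)
    (hc : (a0 * star a0) * ((a0 * star a0) * (star t * t) * (a0 * star a0)) =
          ((a0 * star a0) * (star t * t) * (a0 * star a0)) * (a0 * star a0))
    (h0 : ((a0 * star a0) * (star t * t) * (a0 * star a0)) * a0 = 0) :
    t * a0 = 0 := by
  set q := a0 * star a0 with hqdef
  set e := q * (star t * t) * q with hedef
  have hq : star q = q := by rw [hqdef, star_mul, star_star]
  have hE : e * (q * q) = 0 := by
    have : e * (q * q) = ((e * a0) * star a0) * q := by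
      rw [hqdef]; simp only [mul_assoc]
    rw [this, h0, zero_mul, zero_mul]
  have hv : star (t * (q * q)) * (t * (q * q)) = 0 := by
    have h1 : star (t * (q * q)) * (t * (q * q)) = q * (e * q) := by
      rw [star_mul, star_mul, hq, hedef]
      simp only [mul_assoc]
    rw [h1, ← mul_assoc, hc, mul_assoc, hE]
  have hv0 : t * (q * q) = 0 := hproper _ hv
  have htq : t * q = 0 := by
    apply cancel hproper t q
    rw [hq, mul_assoc]
    exact hv0
  apply cancel hproper t a0
  rw [mul_assoc, ← hqdef]
  exact htq

end Aux

/-- Let `S` be a proper *-semigroup and `A` a commutative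
bi-hereditary *-subsemigroup of `S` containing `0`.  Then
`P(A)^{⊥_A} = {A ∩ I : I ∈ P(S)^⊥}`. -/
theorem stmt_8 {S : Type*} [SemigroupWithZero S] [StarMul S]
    (hproper : ∀ s : S, star s * s = 0 → s = 0) (A : Set S)
    (h0 : (0 : S) ∈ A) (hAstar : starSet A = A)
    (hAmul : ∀ a ∈ A, ∀ b ∈ A, a * b ∈ A)
    (hAbiher : ∀ t ∈ A ∩ Pos S, ∀ s ∈ Pos S, t * s * t ∈ A)
    (hAcomm : ∀ a ∈ A, ∀ b ∈ A, a * b = b * a) :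
    PperpIn A = {J | ∃ I ∈ Pperp S, J = A ∩ I} := by
  have hstarA : ∀ a ∈ A, star a ∈ A := by
    intro a ha
    rw [← hAstar]
    exact ⟨a, ha, rfl⟩
  ext J
  constructor
  · rintro ⟨T, hTA, rfl⟩
    refine ⟨pAnn T, ⟨T, rfl⟩, ?_⟩
    ext a
    exact Iff.rfl
  · rintro ⟨I, ⟨T, rfl⟩, rfl⟩
    set T' : Set S :=
      {e | ∃ t ∈ T, ∃ b ∈ A, e = (star b * b) * (star t * t) * (star b * b)} with hT'def
    have hT'A : T' ⊆ A := by
      rintro e ⟨t, ht, b, hb, rfl⟩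
      have hp : star b * b ∈ A ∩ Pos S :=
        ⟨hAmul _ (hstarA b hb) _ hb, ⟨b, rfl⟩⟩
      exact hAbiher _ hp _ ⟨t, rfl⟩
    refine ⟨T', hT'A, ?_⟩
    ext a
    constructor
    · -- A ∩ pAnn T ⊆ pAnnIn A T'
      rintro ⟨ha, haI⟩
      refine ⟨ha, ?_⟩
      rintro e ⟨t, ht, b, hb, rfl⟩
      have hpA : star b * b ∈ A := hAmul _ (hstarA b hb) _ hb
      have hann : ∀ x : S, x ∈ A → t * x = 0 →
          (star b * b) * (star t * t) * (star b * b) * x = 0 := by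
        intro x hx htx
        have hcx : (star b * b) * x = x * (star b * b) := hAcomm _ hpA _ hx
        calc (star b * b) * (star t * t) * (star b * b) * x
            = (star b * b) * (star t * (t * ((star b * b) * x))) := by
              simp only [mul_assoc]
          _ = (star b * b) * (star t * ((t * x) * (star b * b))) := by
              rw [hcx]; simp only [mul_assoc]
          _ = 0 := by rw [htx, zero_mul, mul_zero, mul_zero]
      exact ⟨hann _ (hstarA a ha) (haI t ht).1, hann _ ha (haI t ht).2⟩
    · -- pAnnIn A T' ⊆ A ∩ pAnn T
      rintro ⟨ha, hH⟩
      refine ⟨ha, ?_⟩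
      intro t ht
      have haa : a * star a ∈ A := hAmul _ ha _ (hstarA a ha)
      have hsaa : star a * a ∈ A := hAmul _ (hstarA a ha) _ ha
      -- e₂ = (a a*)(t* t)(a a*) ∈ T' via b = a*
      have he2mem : (a * star a) * (star t * t) * (a * star a) ∈ T' :=
        ⟨t, ht, star a, hstarA a ha, by rw [star_star]⟩
      -- e₁ = (a* a)(t* t)(a* a) ∈ T' via b = a
      have he1mem : (star a * a) * (star t * t) * (star a * a) ∈ T' :=
        ⟨t, ht, a, ha, rfl⟩
      have he2A : (a * star a) * (star t * t) * (a * star a) ∈ A := hT'A he2mem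
      have he1A : (star a * a) * (star t * t) * (star a * a) ∈ A := hT'A he1mem
      constructor
      · -- t * star a = 0, use key with a0 = star a, q = star a * a
        have := key hproper t (star a)
        rw [star_star] at this
        exact this (hAcomm _ hsaa _ he1A) (hH _ he1mem).1
      · -- t * a = 0, use key with a0 = a, q = a * star a
        exact key hproper t a (hAcomm _ haa _ he2A) (hH _ he2mem).2

end Stmt8
end

section
/- Let S be a proper *-semigroup and let A ∈ P(S)^⊥ be commutative, i.e. a b = b a for all a, b ∈ A. Then A is ∇-finite: for every B ∈ P(S)^⊥ with B ⊆ A and B^∇ = A^∇, one has B = A. -/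
namespace Stmt9

/-- The *-annihilator `T^⊥`. -/
def pAnn {S : Type*} [Mul S] [Star S] [Zero S] (T : Set S) : Set S :=
  {s | ∀ t ∈ T, t * star s = 0 ∧ t * s = 0}

/-- The annihilator ideal `T^∇`. -/
def nAnn {S : Type*} [Mul S] [Star S] [Zero S] (T : Set S) : Set S :=
  {s | ∀ t ∈ T, ∀ u : S, t * u * s = 0}

/-- `P(S)^⊥ = {T^⊥ : T ⊆ S}`. -/
def Pperp (S : Type*) [Mul S] [Star S] [Zero S] : Set (Set S) := {A | ∃ T : Set S, A = pAnn T}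

/-- Let `S` be a proper *-semigroup and let `A ∈ P(S)^⊥` be
commutative.  Then `A` is `∇`-finite: for every `B ∈ P(S)^⊥` with `B ⊆ A` and
`B^∇ = A^∇`, one has `B = A`. -/
theorem stmt_9 {S : Type*} [SemigroupWithZero S] [StarMul S]
    (hproper : ∀ s : S, star s * s = 0 → s = 0)
    (A : Set S) (hA : A ∈ Pperp S) (hAcomm : ∀ a ∈ A, ∀ b ∈ A, a * b = b * a) :
    ∀ B ∈ Pperp S, B ⊆ A → nAnn B = nAnn A → B = A := by
  obtain ⟨T, rfl⟩ := hA
  intro B hB hBA hnn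
  obtain ⟨U, rfl⟩ := hB
  -- `pAnn T` is star-closed
  have hstarT : ∀ s ∈ pAnn T, star s ∈ pAnn T := by
    intro s hs t ht
    exact ⟨by simpa using (hs t ht).2, (hs t ht).1⟩
  -- the key claim: `u * a = 0` for `a ∈ A = pAnn T`, `u ∈ U`
  have key : ∀ a ∈ pAnn T, ∀ u ∈ U, u * a = 0 := by
    intro a ha u hu
    set x : S := star (u * a) * (u * a) with hxdef
    have hxstar : star x = x := by
      simp [hxdef, star_mul, mul_assoc]
    -- `x ∈ A`
    have hxA : x ∈ pAnn T := by
      intro t ht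
      have h1 : t * x = 0 := by
        have h : t * x = ((t * star a) * star u) * (u * a) := by
          simp [hxdef, star_mul, mul_assoc]
        rw [h, (ha t ht).1, zero_mul, zero_mul]
      exact ⟨by rw [hxstar]; exact h1, h1⟩
    -- `x * b = 0` for every `b ∈ B`
    have hxb : ∀ b ∈ pAnn U, x * b = 0 := by
      intro b hb
      have hub : u * b = 0 := (hb u hu).2
      have hab : a * b = b * a := hAcomm a ha b (hBA hb)
      have h1 : u * (a * b) = 0 := by rw [hab, ← mul_assoc, hub, zero_mul]
      have h : x * b = star (u * a) * (u * (a * b)) := by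
        simp [hxdef, mul_assoc]
      rw [h, h1, mul_zero]
    -- `x * x ∈ nAnn B`
    have hx2 : x * x ∈ nAnn (pAnn U) := by
      intro b hb w
      -- `p := b * w * x ∈ A`
      have hpA : b * w * x ∈ pAnn T := by
        intro t ht
        have htb : t * b = 0 := (hBA hb t ht).2
        have htx : t * x = 0 := (hxA t ht).2
        constructor
        · have h : t * star (b * w * x) = ((t * x) * star w) * star b := by
            simp [star_mul, hxstar, mul_assoc]
          rw [h, htx, zero_mul, zero_mul]
        · have h : t * (b * w * x) = ((t * b) * w) * x := by
            simp [mul_assoc]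
          rw [h, htb, zero_mul, zero_mul]
      have hcomm : (b * w * x) * x = x * (b * w * x) := hAcomm _ hpA x hxA
      have hxp : x * (b * w * x) = 0 := by
        have h : x * (b * w * x) = ((x * b) * w) * x := by simp [mul_assoc]
        rw [h, hxb b hb, zero_mul, zero_mul]
      have h : b * w * (x * x) = (b * w * x) * x := by simp [mul_assoc]
      rw [h, hcomm, hxp]
    rw [hnn] at hx2
    have hstar2 : star (x * x) = x * x := by rw [star_mul, hxstar]
    -- `x * x ∈ A`
    have hx2A : x * x ∈ pAnn T := by
      intro t ht
      have htx : t * x = 0 := (hxA t ht).2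
      constructor
      · rw [hstar2, ← mul_assoc, htx, zero_mul]
      · rw [← mul_assoc, htx, zero_mul]
    -- every left multiple of `x * x` vanishes
    have hvy : ∀ v : S, v * (x * x) = 0 := by
      intro v
      apply hproper
      have h : star (v * (x * x)) * (v * (x * x))
          = (x * x) * (star v * v) * (x * x) := by
        rw [star_mul, hstar2]; simp [mul_assoc]
      rw [h]
      exact hx2 (x * x) hx2A (star v * v)
    have hx2z : x * x = 0 := by
      apply hproper
      rw [hstar2]
      exact hvy (x * x)
    have hxz : x = 0 := by
      apply hproper
      rw [hxstar]
      exact hx2z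
    exact hproper _ hxz
  -- conclude `B = A`
  refine Set.Subset.antisymm hBA ?_
  intro a ha u hu
  exact ⟨key (star a) (hstarT a ha) u hu, key a ha u hu⟩

end Stmt9
end

section
/- Let S be a proper *-semigroup and let I be a self-adjoint (I = I*) essential (I^⊥ = {0}) ideal of S. Then the maps B ↦ B^⊥⊥ and A ↦ A ∩ I are mutually inverse inclusion-preserving bijections between P(I)^{⊥_I} and P(S)^⊥ satisfying (B^{⊥_I})^{⊥⊥} = (B^{⊥⊥})^⊥ for all B ∈ P(I)^{⊥_I}, and the same two maps are also mutually inverse inclusion-preserving bijections between P(I)^{∇_I} and P(S)^∇. -/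
namespace Stmt11

/-- `T* = {t* : t ∈ T}`. -/
def starSet {S : Type*} [Star S] (T : Set S) : Set S := star '' T

/-- The *-annihilator `T^⊥`. -/
def pAnn {S : Type*} [Mul S] [Star S] [Zero S] (T : Set S) : Set S :=
  {s | ∀ t ∈ T, t * star s = 0 ∧ t * s = 0}

/-- The annihilator ideal `T^∇`. -/
def nAnn {S : Type*} [Mul S] [Star S] [Zero S] (T : Set S) : Set S :=
  {s | ∀ t ∈ T, ∀ u : S, t * u * s = 0}

/-- `P(S)^⊥ = {T^⊥ : T ⊆ S}`. -/
def Pperp (S : Type*) [Mul S] [Star S] [Zero S] : Set (Set S) := {A | ∃ T : Set S, A = pAnn T}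

/-- `P(S)^∇ = {T^∇ : T ⊆ S}`. -/
def Pnabla (S : Type*) [Mul S] [Star S] [Zero S] : Set (Set S) := {A | ∃ T : Set S, A = nAnn T}

/-- The relative *-annihilator `T^{⊥_I}`. -/
def pAnnIn {S : Type*} [Mul S] [Star S] [Zero S] (I T : Set S) : Set S :=
  {a | a ∈ I ∧ ∀ t ∈ T, t * star a = 0 ∧ t * a = 0}

/-- The relative annihilator ideal `T^{∇_I}`. -/
def nAnnIn {S : Type*} [Mul S] [Star S] [Zero S] (I T : Set S) : Set S :=
  {a | a ∈ I ∧ ∀ t ∈ T, ∀ u ∈ I, t * u * a = 0}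

/-- `P(I)^{⊥_I} = {T^{⊥_I} : T ⊆ I}`. -/
def PperpIn {S : Type*} [Mul S] [Star S] [Zero S] (I : Set S) : Set (Set S) :=
  {J | ∃ T : Set S, T ⊆ I ∧ J = pAnnIn I T}

/-- `P(I)^{∇_I} = {T^{∇_I} : T ⊆ I}`. -/
def PnablaIn {S : Type*} [Mul S] [Star S] [Zero S] (I : Set S) : Set (Set S) :=
  {J | ∃ T : Set S, T ⊆ I ∧ J = nAnnIn I T}

section Aux
variable {S : Type*} [SemigroupWithZero S] [StarMul S]

lemma star_zero' (hp : ∀ s : S, star s * s = 0 → s = 0) : (star (0:S)) = 0 :=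
  hp _ (by rw [star_star, zero_mul])

lemma star_eq_zero' (hp : ∀ s : S, star s * s = 0 → s = 0) {x : S} (h : star x = 0) : x = 0 := by
  have h2 := congrArg star h
  rwa [star_star, star_zero' hp] at h2

lemma proper' (hp : ∀ s : S, star s * s = 0 → s = 0) {x : S} (h : x * star x = 0) : x = 0 := by
  apply star_eq_zero' hp
  exact hp _ (by rwa [star_star])

lemma L2a (hp : ∀ s : S, star s * s = 0 → s = 0) {x y : S} (h : x * (y * star y) = 0) :
    x * y = 0 := by
  apply proper' hp
  rw [star_mul]
  calc x * y * (star y * star x) = (x * (y * star y)) * star x := by simp only [mul_assoc]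
    _ = 0 := by rw [h, zero_mul]

lemma pAnn_antitone {T T' : Set S} (h : T ⊆ T') : pAnn T' ⊆ pAnn T :=
  fun s hs t ht => hs t (h ht)

lemma star_mem_pAnn {T : Set S} {x : S} (hs : x ∈ pAnn T) : star x ∈ pAnn T := by
  intro t ht
  obtain ⟨h1, h2⟩ := hs t ht
  rw [star_star]
  exact ⟨h2, h1⟩

lemma mem_pAnn2 (hp : ∀ s : S, star s * s = 0 → s = 0) {A : Set S} {s : S}
    (hs : s ∈ A) (hs' : star s ∈ A) : s ∈ pAnn (pAnn A) := by
  intro t ht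
  have h1 : s * star t = 0 := (ht s hs).1
  have h2 : star s * star t = 0 := (ht (star s) hs').1
  constructor
  · apply star_eq_zero' hp
    rw [star_mul, star_star]
    exact h1
  · apply star_eq_zero' hp
    rw [star_mul]
    exact h2

lemma KL (hp : ∀ s : S, star s * s = 0 → s = 0) {t x : S}
    (h : (star t * ((t * star t) * t)) * x = 0) : t * x = 0 := by
  have h' : star t * (t * (star t * (t * x))) = 0 := by simpa only [mul_assoc] using h
  have h1 : star t * (t * x) = 0 := by
    apply hp
    simp only [star_mul, star_star, mul_assoc]
    rw [h', mul_zero]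
  apply hp
  simp only [star_mul, mul_assoc]
  rw [h1, mul_zero]

lemma triple (hp : ∀ s : S, star s * s = 0 → s = 0) (T : Set S) :
    pAnn (pAnn (pAnn T)) = pAnn T := by
  apply Set.Subset.antisymm
  · intro x hx t ht
    have hy : (star t * ((t * star t) * t)) ∈ pAnn (pAnn T) := by
      intro a ha
      have hat : a * star t = 0 := by
        apply star_eq_zero' hp
        rw [star_mul, star_star]
        exact (ha t ht).1
      constructor
      · simp only [star_mul, star_star, mul_assoc]
        rw [← mul_assoc, hat, zero_mul]
      · simp only [mul_assoc]
        rw [← mul_assoc, hat, zero_mul]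
    obtain ⟨hy1, hy2⟩ := hx _ hy
    exact ⟨KL hp hy1, KL hp hy2⟩
  · intro x hx
    exact mem_pAnn2 hp hx (star_mem_pAnn hx)

lemma master (hp : ∀ s : S, star s * s = 0 → s = 0) {I : Set S}
    (hIstar : ∀ i ∈ I, star i ∈ I)
    (hIleft : ∀ s : S, ∀ t ∈ I, s * t ∈ I) (hIright : ∀ t ∈ I, ∀ s : S, t * s ∈ I)
    (hess : pAnn I = {0}) (T : Set S) :
    pAnn (pAnn (pAnn T ∩ I)) = pAnn T := by
  have hzero : ∀ x : S, (∀ i ∈ I, i * star x = 0 ∧ i * x = 0) → x = 0 := by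
    intro x hx
    have hx' : x ∈ pAnn I := hx
    rw [hess] at hx'
    exact hx'
  apply Set.Subset.antisymm
  · intro x hx
    have h2 : x ∈ pAnn (pAnn (pAnn T)) :=
      pAnn_antitone (pAnn_antitone Set.inter_subset_left) hx
    rwa [triple hp] at h2
  · have main : ∀ s ∈ pAnn T, ∀ t ∈ pAnn (pAnn T ∩ I), t * s = 0 := by
      intro s hs t ht
      have hsand : ∀ u : S, s * (u * star s) ∈ pAnn T := by
        intro u t' ht'
        have h2 : t' * s = 0 := (hs t' ht').2
        constructor
        · simp only [star_mul, star_star, mul_assoc]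
          rw [← mul_assoc, h2, zero_mul]
        · rw [← mul_assoc, h2, zero_mul]
      have hsandI : ∀ u ∈ I, s * (u * star s) ∈ I :=
        fun u hu => hIleft s _ (hIright u hu (star s))
      have P1 : ∀ i ∈ I, i * (star s * star t) = 0 := by
        intro i hi
        have hat : (s * ((star i * i) * star s)) * star t = 0 :=
          (ht _ ⟨hsand _, hsandI _ (hIright (star i) (hIstar i hi) i)⟩).1
        apply hp
        simp only [star_mul, star_star, mul_assoc]
        simp only [mul_assoc] at hat
        rw [hat, mul_zero]
      have P5 : ∀ i ∈ I, i * (s * (star s * star t)) = 0 := by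
        intro i hi
        have hu' : (star s * (star i * (i * s))) ∈ I :=
          hIleft _ _ (hIleft _ _ (hIright i hi s))
        have hat : (s * ((star s * (star i * (i * s))) * star s)) * star t = 0 :=
          (ht _ ⟨hsand _, hsandI _ hu'⟩).1
        apply hp
        simp only [star_mul, star_star, mul_assoc]
        simp only [mul_assoc] at hat
        rw [hat, mul_zero]
      have hq : ∀ i ∈ I, i * (t * (s * (star s * star t))) = 0 := by
        intro i hi
        have h5 := P5 (i * t) (hIright i hi t)
        simpa only [mul_assoc] using h5
      have hq0 : t * (s * (star s * star t)) = 0 := by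
        apply hzero
        intro i hi
        refine ⟨?_, hq i hi⟩
        have hqq : star (t * (s * (star s * star t))) = t * (s * (star s * star t)) := by
          simp only [star_mul, star_star, mul_assoc]
        rw [hqq]
        exact hq i hi
      have hfin : (t * s) * star (t * s) = 0 := by
        simp only [star_mul, mul_assoc]
        exact hq0
      exact proper' hp hfin
    intro s hs t ht
    exact ⟨main (star s) (star_mem_pAnn hs) t ht, main s hs t ht⟩

lemma master' (hp : ∀ s : S, star s * s = 0 → s = 0) {I : Set S}
    (hIstar : ∀ i ∈ I, star i ∈ I)
    (hIleft : ∀ s : S, ∀ t ∈ I, s * t ∈ I) (hIright : ∀ t ∈ I, ∀ s : S, t * s ∈ I)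
    (hess : pAnn I = {0}) (X : Set S) :
    pAnn (pAnn X ∩ I) = pAnn (pAnn X) := by
  have h := congrArg pAnn (master hp hIstar hIleft hIright hess X)
  rwa [triple hp] at h

lemma pAnnIn_eq (I T : Set S) : pAnnIn I T = pAnn T ∩ I := by
  ext a
  exact ⟨fun h => ⟨h.2, h.1⟩, fun h => ⟨h.2, h.1⟩⟩

lemma nAnn_eq_pAnn_TS (hp : ∀ s : S, star s * s = 0 → s = 0) (T : Set S) :
    nAnn T = pAnn {x | ∃ t ∈ T, ∃ u : S, x = t * u} := by
  ext s
  constructor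
  · intro hs y hy
    obtain ⟨t, ht, u, rfl⟩ := hy
    constructor
    · apply L2a hp
      rw [star_star]
      have h := hs t ht (u * star s)
      simp only [mul_assoc] at h ⊢
      exact h
    · exact hs t ht u
  · intro hs t ht u
    exact (hs (t * u) ⟨t, ht, u, rfl⟩).2

lemma nAnnIn_eq (hp : ∀ s : S, star s * s = 0 → s = 0) {I : Set S}
    (hIleft : ∀ s : S, ∀ t ∈ I, s * t ∈ I) (hIright : ∀ t ∈ I, ∀ s : S, t * s ∈ I)
    (T : Set S) : nAnnIn I T = nAnn T ∩ I := by
  ext a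
  constructor
  · rintro ⟨haI, h⟩
    refine ⟨fun t ht u => ?_, haI⟩
    have step1 : ∀ v ∈ I, t * v * star a = 0 := by
      intro v hv
      apply L2a hp
      rw [star_star]
      have h2 := h t ht (v * star a) (hIright v hv (star a))
      simp only [mul_assoc] at h2 ⊢
      exact h2
    apply L2a hp
    have h3 := step1 (u * a) (hIleft u a haI)
    simp only [mul_assoc] at h3 ⊢
    exact h3
  · rintro ⟨h, haI⟩
    exact ⟨haI, fun t ht u _ => h t ht u⟩

lemma nAnn_mul_right {T : Set S} {a : S} (ha : a ∈ nAnn T) (v : S) : a * v ∈ nAnn T := by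
  intro t ht u
  rw [← mul_assoc, ha t ht u, zero_mul]

lemma pAnn_mul_right {X : Set S} (hXr : ∀ x ∈ X, ∀ u : S, x * u ∈ X)
    {s : S} (hs : s ∈ pAnn X) (u : S) : s * u ∈ pAnn X := by
  intro j hj
  constructor
  · rw [star_mul, ← mul_assoc]
    exact (hs _ (hXr j hj (star u))).1
  · rw [← mul_assoc, (hs j hj).2, zero_mul]

lemma nAnn_eq_pAnn_of (hp : ∀ s : S, star s * s = 0 → s = 0) {J : Set S}
    (hJstar : ∀ j ∈ J, star j ∈ J) (hJr : ∀ j ∈ J, ∀ u : S, j * u ∈ J) :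
    nAnn J = pAnn J := by
  ext s
  constructor
  · intro hs j hj
    have hstab : ∀ j' ∈ J, ∀ u : S, j' * u * star s = 0 := by
      intro j' hj' u
      apply L2a hp
      rw [star_star]
      have h2 := hs j' hj' (u * star s)
      simp only [mul_assoc] at h2 ⊢
      exact h2
    constructor
    · apply hp
      have h3 := hstab (star j) (hJstar j hj) j
      simp only [star_mul, star_star, mul_assoc] at h3 ⊢
      rw [h3, mul_zero]
    · apply hp
      have h3 := hs (star j) (hJstar j hj) j
      simp only [star_mul, star_star, mul_assoc] at h3 ⊢
      rw [h3, mul_zero]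
  · intro hs t ht u
    exact (hs (t * u) (hJr t ht u)).2

end Aux

/-- Let `S` be a proper *-semigroup and `I = I*` an essential
ideal of `S`.  Then `B ↦ B^⊥⊥` and `A ↦ A ∩ I` are mutually inverse
inclusion-preserving bijections between `P(I)^{⊥_I}` and `P(S)^⊥`, satisfying
`(B^{⊥_I})^{⊥⊥} = (B^{⊥⊥})^⊥` for all `B ∈ P(I)^{⊥_I}`, and the same two maps
are also mutually inverse inclusion-preserving bijections between `P(I)^{∇_I}`
and `P(S)^∇`. -/
theorem stmt_11 {S : Type*} [SemigroupWithZero S] [StarMul S]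
    (hproper : ∀ s : S, star s * s = 0 → s = 0) (I : Set S)
    (hIstar : starSet I = I)
    (hIleft : ∀ s : S, ∀ t ∈ I, s * t ∈ I) (hIright : ∀ t ∈ I, ∀ s : S, t * s ∈ I)
    (hess : pAnn I = {0}) :
    -- the orthoisomorphism between P(I)^{⊥_I} and P(S)^⊥
    ((∀ B ∈ PperpIn I, pAnn (pAnn B) ∈ Pperp S ∧ pAnn (pAnn B) ∩ I = B ∧
        pAnn (pAnn (pAnnIn I B)) = pAnn (pAnn (pAnn B))) ∧
     (∀ A ∈ Pperp S, A ∩ I ∈ PperpIn I ∧ pAnn (pAnn (A ∩ I)) = A) ∧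
     (∀ B B' : Set S, B ∈ PperpIn I → B' ∈ PperpIn I → B ⊆ B' →
        pAnn (pAnn B) ⊆ pAnn (pAnn B')) ∧
     (∀ A A' : Set S, A ∈ Pperp S → A' ∈ Pperp S → A ⊆ A' → A ∩ I ⊆ A' ∩ I)) ∧
    -- the same maps give a bijection between P(I)^{∇_I} and P(S)^∇
    ((∀ B ∈ PnablaIn I, pAnn (pAnn B) ∈ Pnabla S ∧ pAnn (pAnn B) ∩ I = B) ∧
     (∀ A ∈ Pnabla S, A ∩ I ∈ PnablaIn I ∧ pAnn (pAnn (A ∩ I)) = A)) := by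
  have hstarI : ∀ i ∈ I, star i ∈ I := by
    intro i hi
    rw [← hIstar]
    exact ⟨i, hi, rfl⟩
  refine ⟨⟨?_, ?_, ?_, ?_⟩, ?_, ?_⟩
  · -- B ∈ PperpIn I
    rintro B ⟨T₀, hT₀, rfl⟩
    refine ⟨⟨pAnn (pAnnIn I T₀), rfl⟩, ?_, ?_⟩
    · rw [pAnnIn_eq I T₀, master hproper hstarI hIleft hIright hess T₀]
    · rw [pAnnIn_eq I (pAnnIn I T₀),
        master hproper hstarI hIleft hIright hess (pAnnIn I T₀),
        triple hproper (pAnnIn I T₀)]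
  · -- A ∈ Pperp S
    rintro A ⟨T, rfl⟩
    constructor
    · refine ⟨pAnn (pAnn T ∩ I) ∩ I, Set.inter_subset_right, ?_⟩
      rw [pAnnIn_eq I (pAnn (pAnn T ∩ I) ∩ I),
        master' hproper hstarI hIleft hIright hess (pAnn T ∩ I),
        master hproper hstarI hIleft hIright hess T]
    · exact master hproper hstarI hIleft hIright hess T
  · intro B B' _ _ h
    exact pAnn_antitone (pAnn_antitone h)
  · intro A A' _ _ h x hx
    exact ⟨h hx.1, hx.2⟩
  · -- B ∈ PnablaIn I
    rintro B ⟨T₀, hT₀, rfl⟩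
    have key : pAnn (pAnn (nAnnIn I T₀)) = nAnn T₀ := by
      rw [nAnnIn_eq hproper hIleft hIright T₀, nAnn_eq_pAnn_TS hproper T₀,
        master hproper hstarI hIleft hIright hess]
    refine ⟨⟨T₀, key⟩, ?_⟩
    rw [key, ← nAnnIn_eq hproper hIleft hIright T₀]
  · -- A ∈ Pnabla S
    rintro A ⟨T, rfl⟩
    constructor
    · refine ⟨pAnn (nAnn T ∩ I) ∩ I, Set.inter_subset_right, ?_⟩
      have hJstar : ∀ j ∈ pAnn (nAnn T ∩ I) ∩ I, star j ∈ pAnn (nAnn T ∩ I) ∩ I :=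
        fun j hj => ⟨star_mem_pAnn hj.1, hstarI j hj.2⟩
      have hXr : ∀ x ∈ nAnn T ∩ I, ∀ u : S, x * u ∈ nAnn T ∩ I :=
        fun x hx u => ⟨nAnn_mul_right hx.1 u, hIright x hx.2 u⟩
      have hJr : ∀ j ∈ pAnn (nAnn T ∩ I) ∩ I, ∀ u : S, j * u ∈ pAnn (nAnn T ∩ I) ∩ I :=
        fun j hj u => ⟨pAnn_mul_right hXr hj.1 u, hIright j hj.2 u⟩
      rw [nAnnIn_eq hproper hIleft hIright (pAnn (nAnn T ∩ I) ∩ I),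
        nAnn_eq_pAnn_of hproper hJstar hJr,
        master' hproper hstarI hIleft hIright hess (nAnn T ∩ I),
        nAnn_eq_pAnn_TS hproper T,
        master hproper hstarI hIleft hIright hess {x | ∃ t ∈ T, ∃ u : S, x = t * u}]
    · rw [nAnn_eq_pAnn_TS hproper T]
      exact master hproper hstarI hIleft hIright hess _

end Stmt11
end

section
/- Let S be a proper *-semigroup which is ⊥-cancellative and has polar decomposition, and suppose the map r ↦ {r}^⊥⊥ is injective on the projections of S. Then for all projections p, q ∈ S: there exists s ∈ S with s* s = p and s s* = q if and only if {p}^⊥⊥ ∼ {q}^⊥⊥. -/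
namespace Stmt13

/-- The *-annihilator `T^⊥`. -/
def pAnn {S : Type*} [Mul S] [Star S] [Zero S] (T : Set S) : Set S :=
  {s | ∀ t ∈ T, t * star s = 0 ∧ t * s = 0}

/-- `A ∼ B`: there is `s ∈ S` with `{s}^⊥⊥ = A` and `{s*}^⊥⊥ = B`. -/
def Sim {S : Type*} [Mul S] [Star S] [Zero S] (A B : Set S) : Prop :=
  ∃ s : S, pAnn (pAnn {s}) = A ∧ pAnn (pAnn {star s}) = B

section Aux

variable {S : Type*} [SemigroupWithZero S] [StarMul S]

lemma mem_pAnn_singleton {a x : S} :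
    x ∈ pAnn ({a} : Set S) ↔ a * star x = 0 ∧ a * x = 0 := by
  simp [pAnn]

lemma pAnn_antitone {T U : Set S} (h : T ⊆ U) : pAnn U ⊆ pAnn T :=
  fun x hx t ht => hx t (h ht)

lemma star_mem_pAnn {T : Set S} {x : S} (hx : x ∈ pAnn T) : star x ∈ pAnn T := by
  intro t ht
  obtain ⟨h1, h2⟩ := hx t ht
  exact ⟨by simpa using h2, h1⟩

lemma star_zero' (hproper : ∀ s : S, star s * s = 0 → s = 0) : star (0 : S) = 0 :=
  hproper _ (by rw [star_star, zero_mul])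

lemma starClosed_subset_biann (hproper : ∀ s : S, star s * s = 0 → s = 0)
    {T : Set S} (hT : ∀ x ∈ T, star x ∈ T) :
    T ⊆ pAnn (pAnn T) := by
  intro s hs t ht
  obtain ⟨hA1, _⟩ := ht s hs
  obtain ⟨hB1, _⟩ := ht (star s) (hT s hs)
  constructor
  · have := congrArg star hA1
    simpa [star_mul, star_zero' hproper] using this
  · have := congrArg star hB1
    simpa [star_mul, star_zero' hproper] using this

lemma ann_eq_of_biann_eq (hproper : ∀ s : S, star s * s = 0 → s = 0) {U V : Set S}
    (hU : ∀ x ∈ U, star x ∈ U) (hV : ∀ x ∈ V, star x ∈ V)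
    (h : pAnn (pAnn U) = pAnn (pAnn V)) : pAnn U = pAnn V := by
  apply Set.Subset.antisymm
  · calc pAnn U ⊆ pAnn (pAnn (pAnn U)) :=
          starClosed_subset_biann hproper (fun x hx => star_mem_pAnn hx)
      _ = pAnn (pAnn (pAnn V)) := by rw [h]
      _ ⊆ pAnn V := pAnn_antitone (starClosed_subset_biann hproper hV)
  · calc pAnn V ⊆ pAnn (pAnn (pAnn V)) :=
          starClosed_subset_biann hproper (fun x hx => star_mem_pAnn hx)
      _ = pAnn (pAnn (pAnn U)) := by rw [h]
      _ ⊆ pAnn U := pAnn_antitone (starClosed_subset_biann hproper hU)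

lemma starmul_mul_eq_zero_iff (hproper : ∀ s : S, star s * s = 0 → s = 0)
    (a x : S) : star a * a * x = 0 ↔ a * x = 0 := by
  constructor
  · intro h
    apply hproper
    calc star (a * x) * (a * x) = star x * (star a * a * x) := by
          simp [star_mul, mul_assoc]
      _ = 0 := by rw [h, mul_zero]
  · intro h
    rw [mul_assoc, h, mul_zero]

lemma pAnn_eq_starmul_self (hproper : ∀ s : S, star s * s = 0 → s = 0) (a : S) :
    pAnn ({a} : Set S) = pAnn ({star a * a} : Set S) := by
  ext x
  simp only [mem_pAnn_singleton]
  rw [starmul_mul_eq_zero_iff hproper a (star x), starmul_mul_eq_zero_iff hproper a x]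

end Aux

/-- Let `S` be a proper *-semigroup which is ⊥-cancellative and
has polar decomposition, and suppose `r ↦ {r}^⊥⊥` is injective on projections.
Then for all projections `p q ∈ S`:
`(∃ s, s* s = p ∧ s s* = q) ↔ {p}^⊥⊥ ∼ {q}^⊥⊥`. -/
theorem stmt_13 {S : Type*} [SemigroupWithZero S] [StarMul S]
    (hproper : ∀ s : S, star s * s = 0 → s = 0)
    (hcancel : ∀ a b s t : S, pAnn {a} = pAnn {b} → a * s = a * t → b * s = b * t)
    (hpolar : ∀ a : S, ∃ b : S, star b = b ∧ star a * a = b * b ∧ ∃ s : S, a = s * b)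
    (hinj : ∀ p q : S, (star p = p ∧ p * p = p) → (star q = q ∧ q * q = q) →
      pAnn (pAnn {p}) = pAnn (pAnn {q}) → p = q)
    (p q : S) (hp : star p = p ∧ p * p = p) (hq : star q = q ∧ q * q = q) :
    (∃ s : S, star s * s = p ∧ s * star s = q) ↔
      Sim (pAnn (pAnn ({p} : Set S))) (pAnn (pAnn ({q} : Set S))) := by
  obtain ⟨hps, hpp⟩ := hp
  obtain ⟨hqs, hqq⟩ := hq
  constructor
  · rintro ⟨s, h1, h2⟩
    refine ⟨s, ?_, ?_⟩
    · have : pAnn ({s} : Set S) = pAnn ({p} : Set S) := by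
        rw [pAnn_eq_starmul_self hproper s, h1]
      rw [this]
    · have : pAnn ({star s} : Set S) = pAnn ({q} : Set S) := by
        rw [pAnn_eq_starmul_self hproper (star s)]
        rw [star_star, h2]
      rw [this]
  · rintro ⟨s, hA, hB⟩
    -- star-closedness facts
    have hscP : ∀ x ∈ ({p} : Set S), star x ∈ ({p} : Set S) := by
      intro x hx; simp only [Set.mem_singleton_iff] at hx ⊢; rw [hx, hps]
    have hscQ : ∀ x ∈ ({q} : Set S), star x ∈ ({q} : Set S) := by
      intro x hx; simp only [Set.mem_singleton_iff] at hx ⊢; rw [hx, hqs]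
    have hscS : ∀ x ∈ ({star s * s} : Set S), star x ∈ ({star s * s} : Set S) := by
      intro x hx; simp only [Set.mem_singleton_iff] at hx ⊢; rw [hx]; simp [star_mul]
    have hscS' : ∀ x ∈ ({s * star s} : Set S), star x ∈ ({s * star s} : Set S) := by
      intro x hx; simp only [Set.mem_singleton_iff] at hx ⊢; rw [hx]; simp [star_mul]
    -- {s}^⊥ = {p}^⊥
    have hsp : pAnn ({s} : Set S) = pAnn ({p} : Set S) := by
      rw [pAnn_eq_starmul_self hproper s]
      apply ann_eq_of_biann_eq hproper hscS hscP
      rw [← pAnn_eq_starmul_self hproper s, hA]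
    -- {star s}^⊥ = {q}^⊥
    have hsq : pAnn ({star s} : Set S) = pAnn ({q} : Set S) := by
      rw [pAnn_eq_starmul_self hproper (star s), star_star]
      apply ann_eq_of_biann_eq hproper hscS' hscQ
      rw [show ({s * star s} : Set S) = {star (star s) * star s} by rw [star_star], ← pAnn_eq_starmul_self hproper (star s), hB]
    -- polar decomposition of s
    obtain ⟨b, hbstar, hbb, u, hub⟩ := hpolar s
    have hpb : pAnn ({p} : Set S) = pAnn ({b} : Set S) := by
      rw [← hsp, pAnn_eq_starmul_self hproper s, hbb,
        pAnn_eq_starmul_self hproper b, hbstar]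
    -- cancellation both ways
    have cbp : ∀ x y : S, b * x = b * y → p * x = p * y := fun x y h =>
      hcancel b p x y hpb.symm h
    have cpb : ∀ x y : S, p * x = p * y → b * x = b * y := fun x y h =>
      hcancel p b x y hpb h
    have hz : ∀ y : S, p * y = 0 ↔ b * y = 0 := by
      intro y
      constructor
      · intro h
        have := cpb y 0 (by rw [h, mul_zero])
        rwa [mul_zero] at this
      · intro h
        have := cbp y 0 (by rw [h, mul_zero])
        rwa [mul_zero] at this
    -- star s = b * star u
    have hss : star s = b * star u := by rw [hub, star_mul, hbstar]
    -- b * (star u * (u * b)) = b * b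
    have e1 : b * (star u * (u * b)) = b * b := by
      have : star s * s = b * b := hbb
      rw [hss, hub] at this
      calc b * (star u * (u * b)) = b * star u * (u * b) := by rw [mul_assoc]
        _ = b * b := this
    have e2 : p * (star u * (u * b)) = p * b := cbp _ _ e1
    -- star of e2 : b * (star u * (u * p)) = b * p
    have e3 : b * (star u * (u * p)) = b * p := by
      simpa [star_mul, star_star, hps, hbstar, mul_assoc] using congrArg star e2
    have e4 : p * (star u * (u * p)) = p * p := cbp _ _ e3
    have e4' : p * (star u * (u * p)) = p := by rw [e4, hpp]
    -- t := u * p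
    have stt : star (u * p) * (u * p) = p := by
      calc star (u * p) * (u * p) = p * star u * (u * p) := by rw [star_mul, hps]
        _ = p * (star u * (u * p)) := by rw [mul_assoc]
        _ = p := e4'
    -- r := u * (p * star u)
    set r : S := u * (p * star u) with hr
    have h5 : ∀ z : S, p * (star u * (u * (p * z))) = p * z := by
      intro z
      have := congrArg (· * z) e4'
      simpa [mul_assoc] using this
    have hrstar : star r = r := by
      rw [hr]; simp [star_mul, hps, mul_assoc]
    have hrr : r * r = r := by
      rw [hr]
      calc u * (p * star u) * (u * (p * star u))
          = u * (p * (star u * (u * (p * star u)))) := by simp [mul_assoc]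
        _ = u * (p * star u) := by rw [h5]
    -- (u*p) * star (u*p) = r
    have tts : (u * p) * star (u * p) = r := by
      rw [star_mul, hps, hr]
      calc u * p * (p * star u) = u * (p * p * star u) := by simp [mul_assoc]
        _ = u * (p * star u) := by rw [hpp]
    -- pAnn {r} = pAnn {q}
    have hann_r : pAnn ({r} : Set S) = pAnn ({q} : Set S) := by
      have key : star (p * star u) * (p * star u) = r := by
        rw [star_mul, star_star, hps, hr]
        calc u * p * (p * star u) = u * (p * p * star u) := by simp [mul_assoc]
          _ = u * (p * star u) := by rw [hpp]
      have step1 : pAnn ({p * star u} : Set S) = pAnn ({r} : Set S) := by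
        rw [pAnn_eq_starmul_self hproper (p * star u), key]
      have step2 : pAnn ({p * star u} : Set S) = pAnn ({b * star u} : Set S) := by
        ext x
        simp only [mem_pAnn_singleton]
        rw [mul_assoc p (star u) (star x), mul_assoc p (star u) x,
          mul_assoc b (star u) (star x), mul_assoc b (star u) x,
          hz (star u * star x), hz (star u * x)]
      rw [← step1, step2, ← hss, hsq]
    -- conclude r = q
    have hrq : r = q := by
      apply hinj r q ⟨hrstar, hrr⟩ ⟨hqs, hqq⟩
      rw [hann_r]
    exact ⟨u * p, stt, by rw [tts, hrq]⟩

end Stmt13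
end

section
/- Let S be a proper *-semigroup. The relations ∼ and ≾ on P(S)^⊥ are transitive. Moreover, ∼ is reflexive if and only if P(S)^⊥ = {{s}^⊥ : s ∈ S}, and likewise ≾ is reflexive if and only if P(S)^⊥ = {{s}^⊥ : s ∈ S}. -/
namespace Stmt14

/-- The *-annihilator `T^⊥`. -/
def pAnn {S : Type*} [Mul S] [Star S] [Zero S] (T : Set S) : Set S :=
  {s | ∀ t ∈ T, t * star s = 0 ∧ t * s = 0}

/-- `P(S)^⊥ = {T^⊥ : T ⊆ S}`. -/
def Pperp (S : Type*) [Mul S] [Star S] [Zero S] : Set (Set S) := {A | ∃ T : Set S, A = pAnn T}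

/-- `A ∼ B`: there is `s ∈ S` with `{s}^⊥⊥ = A` and `{s*}^⊥⊥ = B`. -/
def Sim {S : Type*} [Mul S] [Star S] [Zero S] (A B : Set S) : Prop :=
  ∃ s : S, pAnn (pAnn {s}) = A ∧ pAnn (pAnn {star s}) = B

/-- `A ≾ B`: `A ∼ C ⊆ B` for some `C ∈ P(S)^⊥`. -/
def PrecSim {S : Type*} [Mul S] [Star S] [Zero S] (A B : Set S) : Prop :=
  ∃ C ∈ Pperp S, Sim A C ∧ C ⊆ B

section Aux

variable {S : Type*} [SemigroupWithZero S] [StarMul S]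

lemma star_zero' : star (0 : S) = 0 := by
  have h : star ((0 : S) * star 0) = star (0 : S) := by rw [zero_mul]
  rw [star_mul, star_star, zero_mul] at h
  exact h.symm

lemma mem_pAnn_singleton {s x : S} : x ∈ pAnn {s} ↔ s * star x = 0 ∧ s * x = 0 := by
  simp [pAnn]

lemma pAnn_antitone {T T' : Set S} (h : T ⊆ T') : pAnn T' ⊆ pAnn T :=
  fun x hx t ht => hx t (h ht)

lemma star_mem_pAnn {T : Set S} {x : S} (hx : x ∈ pAnn T) : star x ∈ pAnn T := by
  intro t ht
  obtain ⟨h1, h2⟩ := hx t ht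
  exact ⟨by simpa using h2, h1⟩

lemma pAnn_subset_pAnn_pAnn (T : Set S) : pAnn T ⊆ pAnn (pAnn (pAnn T)) := by
  intro x hx y hy
  constructor
  · have h1 : x * star y = 0 := (hy x hx).1
    have h2 : star (x * star y) = 0 := by rw [h1, star_zero']
    simpa [star_mul, star_star] using h2
  · have h1 : star x * star y = 0 := (hy (star x) (star_mem_pAnn hx)).1
    have h2 : star (star x * star y) = 0 := by rw [h1, star_zero']
    simpa [star_mul, star_star] using h2

lemma selfadj_mem {a : S} (ha : star a = a) : a ∈ pAnn (pAnn {a}) := by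
  intro y hy
  rw [mem_pAnn_singleton] at hy
  have h1 : a * star y = 0 := hy.1
  have key : y * a = 0 := by
    have h2 : star (a * star y) = 0 := by rw [h1, star_zero']
    rw [star_mul, star_star, ha] at h2
    exact h2
  exact ⟨by rw [ha]; exact key, key⟩

lemma cancel_left (hp : ∀ s : S, star s * s = 0 → s = 0) {s x : S}
    (h : star s * (s * x) = 0) : s * x = 0 := by
  apply hp
  rw [star_mul, mul_assoc, h, mul_zero]

lemma pAnn_singleton_star_mul (hp : ∀ s : S, star s * s = 0 → s = 0) (s : S) :
    pAnn {s} = pAnn {star s * s} := by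
  ext x
  simp only [mem_pAnn_singleton]
  constructor
  · rintro ⟨h1, h2⟩
    exact ⟨by rw [mul_assoc, h1, mul_zero], by rw [mul_assoc, h2, mul_zero]⟩
  · rintro ⟨h1, h2⟩
    rw [mul_assoc] at h1 h2
    exact ⟨cancel_left hp h1, cancel_left hp h2⟩

lemma pAnn_triple (hp : ∀ s : S, star s * s = 0 → s = 0) (s : S) :
    pAnn (pAnn (pAnn {s})) = pAnn {s} := by
  have ha : pAnn {s} = pAnn {star s * s} := pAnn_singleton_star_mul hp s
  rw [ha]
  apply subset_antisymm
  · apply pAnn_antitone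
    intro t ht
    rw [Set.mem_singleton_iff] at ht
    subst ht
    exact selfadj_mem (by rw [star_mul, star_star])
  · exact pAnn_subset_pAnn_pAnn _

lemma key_aux (hp : ∀ s : S, star s * s = 0 → s = 0) {u s y : S}
    (h : pAnn {u} ⊆ pAnn {star s}) (hy : (u * s) * y = 0) :
    s * y = 0 := by
  have hu : u * (s * y) = 0 := by rw [← mul_assoc]; exact hy
  have hvs : star ((s * y) * star (s * y)) = (s * y) * star (s * y) := by
    rw [star_mul, star_star]
  have hv : (s * y) * star (s * y) ∈ pAnn {u} := by
    rw [mem_pAnn_singleton]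
    exact ⟨by rw [hvs, ← mul_assoc, hu, zero_mul], by rw [← mul_assoc, hu, zero_mul]⟩
  have hs0 : star s * ((s * y) * star (s * y)) = 0 := (mem_pAnn_singleton.mp (h hv)).2
  have h3 : star (s * y) * ((s * y) * star (s * y)) = 0 := by
    have e : star (s * y) * ((s * y) * star (s * y)) =
        star y * (star s * ((s * y) * star (s * y))) := by
      simp only [star_mul, mul_assoc]
    rw [e, hs0, mul_zero]
  have h4 : star (star (s * y) * (s * y)) * (star (s * y) * (s * y)) = 0 := by
    have e : star (star (s * y) * (s * y)) * (star (s * y) * (s * y)) =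
        (star (s * y) * ((s * y) * star (s * y))) * (s * y) := by
      simp only [star_mul, star_star, mul_assoc]
    rw [e, h3, zero_mul]
  exact hp _ (hp _ h4)

lemma key (hp : ∀ s : S, star s * s = 0 → s = 0) {u s : S}
    (h : pAnn {u} ⊆ pAnn {star s}) : pAnn {u * s} = pAnn {s} := by
  apply subset_antisymm
  · intro x hx
    rw [mem_pAnn_singleton] at hx ⊢
    exact ⟨key_aux hp h hx.1, key_aux hp h hx.2⟩
  · intro x hx
    rw [mem_pAnn_singleton] at hx ⊢
    exact ⟨by rw [mul_assoc, hx.1, mul_zero], by rw [mul_assoc, hx.2, mul_zero]⟩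

lemma sim_trans (hp : ∀ s : S, star s * s = 0 → s = 0) {A B C : Set S}
    (h1 : Sim A B) (h2 : Sim B C) : Sim A C := by
  obtain ⟨s, hs1, hs2⟩ := h1
  obtain ⟨u, hu1, hu2⟩ := h2
  have hb : pAnn (pAnn {star s}) = pAnn (pAnn {u}) := hs2.trans hu1.symm
  have hPb : pAnn {star s} = pAnn {u} := by
    have h' := congrArg pAnn hb
    rwa [pAnn_triple hp, pAnn_triple hp] at h'
  refine ⟨u * s, ?_, ?_⟩
  · rw [key hp hPb.symm.subset]; exact hs1
  · have h' : pAnn {star s} ⊆ pAnn {star (star u)} := by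
      rw [star_star]; exact hPb.subset
    rw [show star (u * s) = star s * star u from star_mul u s, key hp h']
    exact hu2

lemma precsim_trans (hp : ∀ s : S, star s * s = 0 → s = 0) {A B C : Set S}
    (h1 : PrecSim A B) (h2 : PrecSim B C) : PrecSim A C := by
  obtain ⟨C1, hC1p, ⟨s, hs1, hs2⟩, hC1B⟩ := h1
  obtain ⟨C2, hC2p, ⟨u, hu1, hu2⟩, hC2C⟩ := h2
  have hsub : pAnn {u} ⊆ pAnn {star s} := by
    have h4 : pAnn (pAnn {star s}) ⊆ pAnn (pAnn {u}) := by
      rw [hs2, hu1]; exact hC1B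
    have h5 := pAnn_antitone h4
    rwa [pAnn_triple hp, pAnn_triple hp] at h5
  refine ⟨pAnn (pAnn {star (u * s)}), ⟨_, rfl⟩, ⟨u * s, ?_, rfl⟩, ?_⟩
  · rw [key hp hsub]; exact hs1
  · have hstep : pAnn {star u} ⊆ pAnn {star (u * s)} := by
      intro x hx
      rw [mem_pAnn_singleton] at hx ⊢
      rw [star_mul]
      exact ⟨by rw [mul_assoc, hx.1, mul_zero], by rw [mul_assoc, hx.2, mul_zero]⟩
    intro x hx
    have hx2 : x ∈ pAnn (pAnn {star u}) := pAnn_antitone hstep hx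
    rw [hu2] at hx2
    exact hC2C hx2

lemma refl_of_eq (hp : ∀ s : S, star s * s = 0 → s = 0)
    (heq : Pperp S = {A | ∃ s : S, A = pAnn {s}}) :
    ∀ A ∈ Pperp S, Sim A A := by
  intro A hA
  rw [heq] at hA
  obtain ⟨s, rfl⟩ := hA
  have hA' : pAnn (pAnn {s}) ∈ Pperp S := ⟨pAnn {s}, rfl⟩
  rw [heq] at hA'
  obtain ⟨c, hc⟩ := hA'
  have hd : pAnn {c} = pAnn {star c * c} := pAnn_singleton_star_mul hp c
  have hds : star (star c * c) = star c * c := by rw [star_mul, star_star]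
  refine ⟨star c * c, ?_, ?_⟩
  · rw [← hd, ← hc]
    exact pAnn_triple hp s
  · rw [hds, ← hd, ← hc]
    exact pAnn_triple hp s

lemma eq_of_refl (hp : ∀ s : S, star s * s = 0 → s = 0)
    (h : ∀ A ∈ Pperp S, ∃ s : S, pAnn (pAnn {s}) = A) :
    Pperp S = {A | ∃ s : S, A = pAnn {s}} := by
  ext A
  constructor
  · intro hA
    obtain ⟨s, hs⟩ := h A hA
    obtain ⟨u, hu⟩ := h (pAnn A) ⟨A, rfl⟩
    refine ⟨u, ?_⟩
    have h2 : pAnn A = pAnn {s} := by rw [← hs, pAnn_triple hp]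
    calc A = pAnn (pAnn {s}) := hs.symm
      _ = pAnn (pAnn A) := by rw [h2]
      _ = pAnn (pAnn (pAnn {u})) := by rw [hu]
      _ = pAnn {u} := pAnn_triple hp u
  · rintro ⟨s, rfl⟩
    exact ⟨{s}, rfl⟩

end Aux

/-- Let `S` be a proper *-semigroup.  The relations `∼` and `≾`
on `P(S)^⊥` are transitive, and each is reflexive iff
`P(S)^⊥ = {{s}^⊥ : s ∈ S}`. -/
theorem stmt_14 {S : Type*} [SemigroupWithZero S] [StarMul S]
    (hproper : ∀ s : S, star s * s = 0 → s = 0) :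
    (∀ A B C : Set S, A ∈ Pperp S → B ∈ Pperp S → C ∈ Pperp S →
      Sim A B → Sim B C → Sim A C) ∧
    (∀ A B C : Set S, A ∈ Pperp S → B ∈ Pperp S → C ∈ Pperp S →
      PrecSim A B → PrecSim B C → PrecSim A C) ∧
    ((∀ A ∈ Pperp S, Sim A A) ↔ Pperp S = {A | ∃ s : S, A = pAnn {s}}) ∧
    ((∀ A ∈ Pperp S, PrecSim A A) ↔ Pperp S = {A | ∃ s : S, A = pAnn {s}}) := by
  refine ⟨fun A B C _ _ _ h1 h2 => sim_trans hproper h1 h2,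
    fun A B C _ _ _ h1 h2 => precsim_trans hproper h1 h2, ?_, ?_⟩
  · constructor
    · intro hrefl
      exact eq_of_refl hproper fun A hA => (hrefl A hA).elim fun s hs => ⟨s, hs.1⟩
    · intro heq A hA
      exact refl_of_eq hproper heq A hA
  · constructor
    · intro hrefl
      apply eq_of_refl hproper
      intro A hA
      obtain ⟨C, _, ⟨s, hs1, _⟩, _⟩ := hrefl A hA
      exact ⟨s, hs1⟩
    · intro heq A hA
      exact ⟨A, hA, refl_of_eq hproper heq A hA, subset_rfl⟩

end Stmt14
end

section
/- Let S be a proper *-semigroup in which ∼ is reflexive. If 𝒜 ⊆ P(S)^⊥ and B ∈ P(S)^⊥ satisfy (⋂_{A ∈ 𝒜} A^⊥)^⊥ ∼ B, then there is a function f : 𝒜 → P(S)^⊥ such that B = (⋂_{A ∈ 𝒜} f(A)^⊥)^⊥ and A ∼ f(A) for every A ∈ 𝒜. -/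
namespace Stmt15

/-- The *-annihilator `T^⊥`. -/
def pAnn {S : Type*} [Mul S] [Star S] [Zero S] (T : Set S) : Set S :=
  {s | ∀ t ∈ T, t * star s = 0 ∧ t * s = 0}

/-- `P(S)^⊥ = {T^⊥ : T ⊆ S}`. -/
def Pperp (S : Type*) [Mul S] [Star S] [Zero S] : Set (Set S) := {A | ∃ T : Set S, A = pAnn T}

/-- `A ∼ B`: there is `s ∈ S` with `{s}^⊥⊥ = A` and `{s*}^⊥⊥ = B`. -/
def Sim {S : Type*} [Mul S] [Star S] [Zero S] (A B : Set S) : Prop :=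
  ∃ s : S, pAnn (pAnn {s}) = A ∧ pAnn (pAnn {star s}) = B

section Aux

variable {S : Type*} [SemigroupWithZero S] [StarMul S]

lemma star_zero' : star (0 : S) = 0 := by
  have h : (0 : S) * star 0 = star 0 := by
    have h0 : star ((0 : S) * star 0) = star (0 : S) := by rw [zero_mul]
    rw [star_mul, star_star] at h0
    exact h0
  calc star (0 : S) = 0 * star (0 : S) := h.symm
    _ = 0 := zero_mul _

lemma flip_zero {a b : S} (h : a * b = 0) : star b * star a = 0 := by
  rw [← star_mul, h, star_zero']

lemma eq_zero_of_star {a : S} (h : star a = 0) : a = 0 := by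
  have h2 := congrArg star h
  rwa [star_star, star_zero'] at h2

lemma mem_pAnn_singleton {t x : S} : x ∈ pAnn {t} ↔ t * star x = 0 ∧ t * x = 0 := by
  constructor
  · intro h; exact h t rfl
  · rintro ⟨h1, h2⟩ t' ht'
    rw [Set.mem_singleton_iff] at ht'
    subst ht'
    exact ⟨h1, h2⟩

lemma star_mem_pAnn {T : Set S} {x : S} (h : x ∈ pAnn T) : star x ∈ pAnn T := by
  intro t ht
  obtain ⟨h1, h2⟩ := h t ht
  exact ⟨by rwa [star_star], h1⟩

lemma pAnn_antitone {T U : Set S} (h : T ⊆ U) : pAnn U ⊆ pAnn T :=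
  fun x hx t ht => hx t (h ht)

lemma sq_mem {T : Set S} {t : S} (ht : t ∈ T) : star t * t ∈ pAnn (pAnn T) := by
  intro x hx
  obtain ⟨h1, h2⟩ := hx t ht
  have hxt : x * star t = 0 := by
    have h3 := flip_zero h1; rwa [star_star] at h3
  constructor
  · rw [star_mul, star_star, ← mul_assoc, hxt, zero_mul]
  · rw [← mul_assoc, hxt, zero_mul]

lemma pAnn_le_triple {T : Set S} : pAnn T ⊆ pAnn (pAnn (pAnn T)) := by
  intro x hx z hz
  obtain ⟨h1, h2⟩ := hz x hx
  obtain ⟨h3, h4⟩ := hz (star x) (star_mem_pAnn hx)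
  constructor
  · have h5 := flip_zero h1; rwa [star_star] at h5
  · have h5 := flip_zero h3; rwa [star_star, star_star] at h5

lemma cancel_sq (hproper : ∀ s : S, star s * s = 0 → s = 0)
    {t z : S} (h : (star t * t) * z = 0) : t * z = 0 := by
  have h' : star t * (t * z) = 0 := by rwa [mul_assoc] at h
  refine hproper _ ?_
  rw [star_mul, mul_assoc, h', mul_zero]

lemma triple_pAnn (hproper : ∀ s : S, star s * s = 0 → s = 0)
    (T : Set S) : pAnn (pAnn (pAnn T)) = pAnn T := by
  apply Set.Subset.antisymm
  · intro z hz t ht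
    obtain ⟨h1, h2⟩ := hz (star t * t) (sq_mem ht)
    exact ⟨cancel_sq hproper h1, cancel_sq hproper h2⟩
  · exact pAnn_le_triple

lemma key1 (hproper : ∀ s : S, star s * s = 0 → s = 0)
    {s t : S} (hts : star t ∈ pAnn (pAnn {s})) :
    pAnn {s * t} = pAnn {t} := by
  have step : ∀ z' : S, s * (t * z') = 0 → t * z' = 0 := by
    intro z' h
    have hp_sa : star (t * z' * star (t * z')) = t * z' * star (t * z') := by
      rw [star_mul, star_star]
    have hsp : s * (t * z' * star (t * z')) = 0 := by
      rw [← mul_assoc, h, zero_mul]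
    have hpmem : (t * z' * star (t * z')) ∈ pAnn {s} :=
      mem_pAnn_singleton.mpr ⟨by rw [hp_sa]; exact hsp, hsp⟩
    have htp : star t * (t * z' * star (t * z')) = 0 :=
      (pAnn_le_triple hpmem (star t) hts).2
    have hr : (star t * (t * z')) * star (star t * (t * z')) = 0 := by
      have e : (star t * (t * z')) * star (star t * (t * z'))
          = (star t * (t * z' * star (t * z'))) * t := by
        simp only [star_mul, star_star, mul_assoc]
      rw [e, htp, zero_mul]
    have hr0 : star t * (t * z') = 0 := by
      have h5 : star (star t * (t * z')) = 0 := hproper _ (by rwa [star_star])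
      exact eq_zero_of_star h5
    refine hproper _ ?_
    rw [star_mul, mul_assoc, hr0, mul_zero]
  ext z
  rw [mem_pAnn_singleton, mem_pAnn_singleton]
  constructor
  · rintro ⟨h1, h2⟩
    rw [mul_assoc] at h1 h2
    exact ⟨step _ h1, step _ h2⟩
  · rintro ⟨h1, h2⟩
    exact ⟨by rw [mul_assoc, h1, mul_zero], by rw [mul_assoc, h2, mul_zero]⟩

end Aux

/-- Let `S` be a proper *-semigroup in which `∼` is reflexive.
If `𝒜 ⊆ P(S)^⊥` and `B ∈ P(S)^⊥` satisfy `(⋂_{A ∈ 𝒜} A^⊥)^⊥ ∼ B`, then there is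
`f : 𝒜 → P(S)^⊥` with `B = (⋂_{A ∈ 𝒜} f(A)^⊥)^⊥` and `A ∼ f(A)` for all `A ∈ 𝒜`. -/
theorem stmt_15 {S : Type*} [SemigroupWithZero S] [StarMul S]
    (hproper : ∀ s : S, star s * s = 0 → s = 0)
    (hrefl : ∀ A ∈ Pperp S, Sim A A)
    (𝒜 : Set (Set S)) (h𝒜 : 𝒜 ⊆ Pperp S) (B : Set S) (hB : B ∈ Pperp S)
    (hsim : Sim (pAnn (⋂ A ∈ 𝒜, pAnn A)) B) :
    ∃ f : Set S → Set S, (∀ A ∈ 𝒜, f A ∈ Pperp S) ∧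
      B = pAnn (⋂ A ∈ 𝒜, pAnn (f A)) ∧ ∀ A ∈ 𝒜, Sim A (f A) := by
  classical
  obtain ⟨s, hs1, hs2⟩ := hsim
  set K : Set S := ⋂ A ∈ 𝒜, pAnn A with hK
  -- K is a polar
  have hKU : K = pAnn (⋃₀ 𝒜) := by
    ext x
    simp only [hK, Set.mem_iInter]
    constructor
    · rintro h t ⟨A, hA, htA⟩
      exact h A hA t htA
    · intro h A hA t htA
      exact h t ⟨A, hA, htA⟩
  have hPK : pAnn (pAnn K) = K := by
    rw [hKU]; exact triple_pAnn hproper _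
  have hsK : pAnn {s} = K := by
    have h2 := congrArg pAnn hs1
    rwa [triple_pAnn hproper, hPK] at h2
  have hsB : pAnn {star s} = pAnn B := by
    have h2 := congrArg pAnn hs2
    rwa [triple_pAnn hproper] at h2
  -- choose reflexivity witnesses
  have hch : ∀ A, A ∈ 𝒜 → ∃ t : S, pAnn (pAnn {t}) = A ∧ pAnn (pAnn {star t}) = A :=
    fun A hA => hrefl A (h𝒜 hA)
  choose g hg1 hg2 using hch
  have hgt : ∀ A (hA : A ∈ 𝒜), pAnn {g A hA} = pAnn A := by
    intro A hA
    have h2 := congrArg pAnn (hg1 A hA)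
    rwa [triple_pAnn hproper] at h2
  have hgt' : ∀ A (hA : A ∈ 𝒜), pAnn {star (g A hA)} = pAnn A := by
    intro A hA
    have h2 := congrArg pAnn (hg2 A hA)
    rwa [triple_pAnn hproper] at h2
  have hgmem : ∀ A (hA : A ∈ 𝒜), g A hA ∈ A := by
    intro A hA
    suffices h : g A hA ∈ pAnn (pAnn {g A hA}) by rwa [hg1 A hA] at h
    intro z hz
    have hz' : z ∈ pAnn {star (g A hA)} := by
      rw [hgt' A hA, ← hgt A hA]; exact hz
    obtain ⟨h1, h2⟩ := mem_pAnn_singleton.mp hz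
    obtain ⟨h3, h4⟩ := mem_pAnn_singleton.mp hz'
    constructor
    · have h5 := flip_zero h1; rwa [star_star] at h5
    · have h5 := flip_zero h3; rwa [star_star, star_star] at h5
  have hAM : ∀ A (hA : A ∈ 𝒜), A ⊆ pAnn (pAnn {s}) := by
    intro A hA
    rw [hs1]
    have hAA : pAnn (pAnn A) = A := by rw [← hgt A hA, hg1 A hA]
    have hKA : K ⊆ pAnn A := by
      intro y hy
      simp only [hK, Set.mem_iInter] at hy
      exact hy A hA
    intro x hx
    exact pAnn_antitone hKA (hAA.symm ▸ hx)
  -- the cancellation step on the `star s` side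
  have step2 : ∀ y : S, (∀ A (hA : A ∈ 𝒜), star (g A hA) * (star s * y) = 0) →
      star s * y = 0 := by
    intro y hy
    have hm_sa : star (star s * (y * (star y * s))) = star s * (y * (star y * s)) := by
      simp only [star_mul, star_star, mul_assoc]
    have hmA : ∀ A (hA : A ∈ 𝒜), star s * (y * (star y * s)) ∈ pAnn A := by
      intro A hA
      rw [← hgt' A hA]
      have htm : star (g A hA) * (star s * (y * (star y * s))) = 0 := by
        have e : star (g A hA) * (star s * (y * (star y * s)))
            = (star (g A hA) * (star s * y)) * (star y * s) := by
          simp only [mul_assoc]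
        rw [e, hy A hA, zero_mul]
      exact mem_pAnn_singleton.mpr ⟨by rw [hm_sa]; exact htm, htm⟩
    have hmK : star s * (y * (star y * s)) ∈ pAnn {s} := by
      rw [hsK, hK]
      exact Set.mem_iInter₂.mpr hmA
    have hsm : s * (star s * (y * (star y * s))) = 0 := (hmK s rfl).2
    have hmm : (star s * (y * (star y * s))) * (star s * (y * (star y * s))) = 0 := by
      have e : (star s * (y * (star y * s))) * (star s * (y * (star y * s)))
          = (star s * (y * star y)) * (s * (star s * (y * (star y * s)))) := by
        simp only [mul_assoc]
      rw [e, hsm, mul_zero]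
    have hm0 : star s * (y * (star y * s)) = 0 :=
      hproper _ (by rw [hm_sa]; exact hmm)
    have hw : star y * s = 0 := by
      refine hproper _ ?_
      have e : star (star y * s) * (star y * s) = star s * (y * (star y * s)) := by
        simp only [star_mul, star_star, mul_assoc]
      rw [e, hm0]
    have h5 := flip_zero hw
    rwa [star_star] at h5
  refine ⟨fun A => if h : A ∈ 𝒜 then pAnn (pAnn {star (s * g A h)}) else (∅ : Set S),
    ?_, ?_, ?_⟩
  · intro A hA
    refine ⟨pAnn {star (s * g A hA)}, ?_⟩
    simp only [dif_pos hA]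
  · -- B = pAnn (⋂ ...)
    have hf : ∀ A (hA : A ∈ 𝒜),
        pAnn (if h : A ∈ 𝒜 then pAnn (pAnn {star (s * g A h)}) else (∅ : Set S))
          = pAnn {star (s * g A hA)} := by
      intro A hA
      rw [dif_pos hA, triple_pAnn hproper]
    have hiff : ∀ x : S,
        (∀ A (hA : A ∈ 𝒜), x ∈ pAnn {star (s * g A hA)}) ↔ x ∈ pAnn {star s} := by
      intro x
      constructor
      · intro h
        have h1 : ∀ A (hA : A ∈ 𝒜), star (g A hA) * (star s * x) = 0 := by
          intro A hA
          have h2 := (mem_pAnn_singleton.mp (h A hA)).2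
          rwa [star_mul, mul_assoc] at h2
        have h2 : ∀ A (hA : A ∈ 𝒜), star (g A hA) * (star s * star x) = 0 := by
          intro A hA
          have h3 := (mem_pAnn_singleton.mp (h A hA)).1
          rwa [star_mul, mul_assoc] at h3
        exact mem_pAnn_singleton.mpr ⟨step2 (star x) h2, step2 x h1⟩
      · intro h A hA
        obtain ⟨h1, h2⟩ := mem_pAnn_singleton.mp h
        refine mem_pAnn_singleton.mpr ⟨?_, ?_⟩
        · rw [star_mul, mul_assoc, h1, mul_zero]
        · rw [star_mul, mul_assoc, h2, mul_zero]
    have hInter :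
        (⋂ A ∈ 𝒜, pAnn
          (if h : A ∈ 𝒜 then pAnn (pAnn {star (s * g A h)}) else (∅ : Set S)))
          = pAnn {star s} := by
      ext x
      simp only [Set.mem_iInter]
      constructor
      · intro h
        exact (hiff x).mp (fun A hA => (hf A hA) ▸ h A hA)
      · intro h A hA
        rw [hf A hA]
        exact ((hiff x).mpr h) A hA
    rw [hInter]
    exact hs2.symm
  · intro A hA
    refine ⟨s * g A hA, ?_, ?_⟩
    · have hk := key1 hproper (star_mem_pAnn (hAM A hA (hgmem A hA)))
      rw [hk]
      exact hg1 A hA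
    · simp only [dif_pos hA]

end Stmt15
end

section
/- Let S be a proper *-semigroup in which ∼ is reflexive. If A, B ∈ P(S)^⊥ are perspective, i.e. they have a common complement C ∈ P(S)^⊥ (meaning A ∩ C = {0} = B ∩ C and A ∨ C = S = B ∨ C), then A ∼ B. -/
namespace Stmt16

/-- The *-annihilator `T^⊥`. -/
def pAnn {S : Type*} [Mul S] [Star S] [Zero S] (T : Set S) : Set S :=
  {s | ∀ t ∈ T, t * star s = 0 ∧ t * s = 0}

/-- `P(S)^⊥ = {T^⊥ : T ⊆ S}`. -/
def Pperp (S : Type*) [Mul S] [Star S] [Zero S] : Set (Set S) := {A | ∃ T : Set S, A = pAnn T}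

/-- `A ∼ B`: there is `s ∈ S` with `{s}^⊥⊥ = A` and `{s*}^⊥⊥ = B`. -/
def Sim {S : Type*} [Mul S] [Star S] [Zero S] (A B : Set S) : Prop :=
  ∃ s : S, pAnn (pAnn {s}) = A ∧ pAnn (pAnn {star s}) = B

section Aux

variable {S : Type*} [SemigroupWithZero S] [StarMul S]

lemma sz (hpr : ∀ s : S, star s * s = 0 → s = 0) : star (0 : S) = 0 :=
  hpr (star 0) (by rw [star_star, zero_mul])

lemma mem_pAnn_singleton {x t : S} :
    t ∈ pAnn ({x} : Set S) ↔ x * star t = 0 ∧ x * t = 0 := by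
  simp [pAnn]

lemma pAnn_antitone {T U : Set S} (h : T ⊆ U) : pAnn U ⊆ pAnn T :=
  fun s hs t ht => hs t (h ht)

lemma starClosed_pAnn (T : Set S) : ∀ s ∈ pAnn T, star s ∈ pAnn T := by
  intro s hs t ht
  obtain ⟨h1, h2⟩ := hs t ht
  exact ⟨by rwa [star_star], h1⟩

lemma subset_double (hpr : ∀ s : S, star s * s = 0 → s = 0)
    {U : Set S} (hU : ∀ s ∈ U, star s ∈ U) : U ⊆ pAnn (pAnn U) := by
  intro u hu v hv
  have h1 : u * star v = 0 := (hv u hu).1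
  have h2 : star u * star v = 0 := (hv (star u) (hU u hu)).1
  constructor
  · have h' := congrArg star h1
    rwa [star_mul, star_star, sz hpr] at h'
  · have h' := congrArg star h2
    rwa [star_mul, star_star, star_star, sz hpr] at h'

lemma triple_sc (hpr : ∀ s : S, star s * s = 0 → s = 0)
    {U : Set S} (hU : ∀ s ∈ U, star s ∈ U) :
    pAnn (pAnn (pAnn U)) = pAnn U :=
  Set.Subset.antisymm (pAnn_antitone (subset_double hpr hU))
    (subset_double hpr (starClosed_pAnn U))

lemma pAnn_starify (hpr : ∀ s : S, star s * s = 0 → s = 0) (T : Set S) :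
    pAnn T = pAnn ((fun t => star t * t) '' T) := by
  ext s
  constructor
  · intro h t' ht'
    obtain ⟨t, ht, rfl⟩ := ht'
    obtain ⟨h1, h2⟩ := h t ht
    exact ⟨by rw [mul_assoc, h1, mul_zero], by rw [mul_assoc, h2, mul_zero]⟩
  · intro h t ht
    obtain ⟨h1, h2⟩ := h _ ⟨t, ht, rfl⟩
    constructor
    · apply hpr (t * star s)
      have e : star (t * star s) * (t * star s) = s * (star t * t * star s) := by
        rw [star_mul, star_star]; simp [mul_assoc]
      rw [e, h1, mul_zero]
    · apply hpr (t * s)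
      have e : star (t * s) * (t * s) = star s * (star t * t * s) := by
        rw [star_mul]; simp [mul_assoc]
      rw [e, h2, mul_zero]

lemma pAnn_triple (hpr : ∀ s : S, star s * s = 0 → s = 0) (T : Set S) :
    pAnn (pAnn (pAnn T)) = pAnn T := by
  rw [pAnn_starify hpr T]
  exact triple_sc hpr (by rintro s ⟨t, ht, rfl⟩; exact ⟨t, ht, by rw [star_mul, star_star]⟩)

lemma pAnn_single_starmul (hpr : ∀ s : S, star s * s = 0 → s = 0) (x : S) :
    pAnn ({star x * x} : Set S) = pAnn {x} := by
  have := pAnn_starify hpr ({x} : Set S)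
  rw [Set.image_singleton] at this
  exact this.symm

lemma exists_sa (hpr : ∀ s : S, star s * s = 0 → s = 0)
    (hrefl : ∀ A ∈ Pperp S, Sim A A) {X : Set S} (hX : X ∈ Pperp S) :
    ∃ x : S, star x = x ∧ pAnn (pAnn ({x} : Set S)) = X ∧ pAnn ({x} : Set S) = pAnn X := by
  obtain ⟨s, h1, h2⟩ := hrefl X hX
  have e : pAnn ({s * star s} : Set S) = pAnn {star s} := by
    have := pAnn_single_starmul hpr (star s)
    rwa [star_star] at this
  refine ⟨s * star s, by rw [star_mul, star_star], by rw [e, h2], ?_⟩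
  rw [e, ← h2, pAnn_triple hpr]

lemma perp_of_sup (hpr : ∀ s : S, star s * s = 0 → s = 0)
    {X : Set S} (h : pAnn X = Set.univ) : X ⊆ {0} := by
  intro x hx
  have hxx : x ∈ pAnn X := by rw [h]; trivial
  obtain ⟨h1, h2⟩ := hxx x hx
  have hs : star x = 0 := hpr (star x) (by rw [star_star]; exact h1)
  have h' := congrArg star hs
  rw [star_star, sz hpr] at h'
  simpa using h'

lemma Lzero (hpr : ∀ s : S, star s * s = 0 → s = 0) {p q x : S}
    (hsub : pAnn ({p} : Set S) ∩ pAnn {q} ⊆ {0})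
    (hp : p * x = 0) (hq : q * x = 0) : x = 0 := by
  have e : star (x * star x) = x * star x := by rw [star_mul, star_star]
  have hmem : x * star x ∈ pAnn ({p} : Set S) ∩ pAnn {q} := by
    constructor
    · exact mem_pAnn_singleton.mpr
        ⟨by rw [e, ← mul_assoc, hp, zero_mul], by rw [← mul_assoc, hp, zero_mul]⟩
    · exact mem_pAnn_singleton.mpr
        ⟨by rw [e, ← mul_assoc, hq, zero_mul], by rw [← mul_assoc, hq, zero_mul]⟩
  have h0 : x * star x = 0 := hsub hmem
  have hs : star x = 0 := hpr (star x) (by rw [star_star]; exact h0)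
  have h' := congrArg star hs
  rwa [star_star, sz hpr] at h'

lemma key (hpr : ∀ s : S, star s * s = 0 → s = 0) {a b m c a' : S}
    (h1 : pAnn ({b} : Set S) ∩ pAnn {c} ⊆ {0})
    (h2 : pAnn ({m} : Set S) ∩ pAnn {a'} ⊆ {0})
    (hcm : c * m = 0) (ha'a : a' * a = 0) :
    pAnn ({b * m * a} : Set S) = pAnn {a} := by
  have aux : ∀ u : S, b * m * a * u = 0 → a * u = 0 := by
    intro u hu
    have hb : b * (m * (a * u)) = 0 := by rw [← mul_assoc, ← mul_assoc]; exact hu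
    have hc : c * (m * (a * u)) = 0 := by rw [← mul_assoc, hcm, zero_mul]
    have hm0 : m * (a * u) = 0 := Lzero hpr h1 hb hc
    have ha' : a' * (a * u) = 0 := by rw [← mul_assoc, ha'a, zero_mul]
    exact Lzero hpr h2 hm0 ha'
  ext t
  rw [mem_pAnn_singleton, mem_pAnn_singleton]
  constructor
  · rintro ⟨hx, hy⟩
    exact ⟨aux _ hx, aux _ hy⟩
  · rintro ⟨hx, hy⟩
    exact ⟨by rw [mul_assoc, hx, mul_zero], by rw [mul_assoc, hy, mul_zero]⟩

end Aux

/-- Let `S` be a proper *-semigroup in which `∼` is reflexive.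
If `A, B ∈ P(S)^⊥` have a common complement `C ∈ P(S)^⊥` (i.e.
`A ∩ C = {0} = B ∩ C` and `A ∨ C = S = B ∨ C`, where `X ∨ Y = (X^⊥ ∩ Y^⊥)^⊥`),
then `A ∼ B`. -/
theorem stmt_16 {S : Type*} [SemigroupWithZero S] [StarMul S]
    (hproper : ∀ s : S, star s * s = 0 → s = 0)
    (hrefl : ∀ A ∈ Pperp S, Sim A A)
    (A B C : Set S) (hA : A ∈ Pperp S) (hB : B ∈ Pperp S) (hC : C ∈ Pperp S)
    (hAC : A ∩ C = {0}) (hBC : B ∩ C = {0})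
    (hACsup : pAnn (pAnn A ∩ pAnn C) = Set.univ)
    (hBCsup : pAnn (pAnn B ∩ pAnn C) = Set.univ) :
    Sim A B := by
  have hPA : pAnn (pAnn A) = A := by
    obtain ⟨T, rfl⟩ := hA; exact pAnn_triple hproper T
  have hPB : pAnn (pAnn B) = B := by
    obtain ⟨T, rfl⟩ := hB; exact pAnn_triple hproper T
  have hPC : pAnn (pAnn C) = C := by
    obtain ⟨T, rfl⟩ := hC; exact pAnn_triple hproper T
  obtain ⟨a, hsa, haA, haPA⟩ := exists_sa hproper hrefl hA
  obtain ⟨b, hsb, hbB, hbPB⟩ := exists_sa hproper hrefl hB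
  obtain ⟨c, hsc, hcC, hcPC⟩ := exists_sa hproper hrefl hC
  obtain ⟨m, hsm, hmCp, hmPCp⟩ := exists_sa hproper hrefl (⟨C, rfl⟩ : pAnn C ∈ Pperp S)
  obtain ⟨a', hsa', ha'Ap, ha'PAp⟩ := exists_sa hproper hrefl (⟨A, rfl⟩ : pAnn A ∈ Pperp S)
  obtain ⟨b', hsb', hb'Bp, hb'PBp⟩ := exists_sa hproper hrefl (⟨B, rfl⟩ : pAnn B ∈ Pperp S)
  have hm_eq : pAnn ({m} : Set S) = C := by rw [hmPCp, hPC]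
  have ha'_eq : pAnn ({a'} : Set S) = A := by rw [ha'PAp, hPA]
  have hb'_eq : pAnn ({b'} : Set S) = B := by rw [hb'PBp, hPB]
  have hsc_m : ∀ s ∈ ({m} : Set S), star s ∈ ({m} : Set S) := by
    intro s hs; rw [Set.mem_singleton_iff] at hs ⊢; rw [hs, hsm]
  have hsc_a : ∀ s ∈ ({a} : Set S), star s ∈ ({a} : Set S) := by
    intro s hs; rw [Set.mem_singleton_iff] at hs ⊢; rw [hs, hsa]
  have hsc_b : ∀ s ∈ ({b} : Set S), star s ∈ ({b} : Set S) := by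
    intro s hs; rw [Set.mem_singleton_iff] at hs ⊢; rw [hs, hsb]
  -- c * m = 0
  have hcm : c * m = 0 := by
    have hm_mem : m ∈ pAnn (pAnn ({m} : Set S)) :=
      subset_double hproper hsc_m rfl
    rw [hmCp, ← hcPC] at hm_mem
    exact (mem_pAnn_singleton.mp hm_mem).2
  -- a' * a = 0
  have ha'a : a' * a = 0 := by
    have ha_mem : a ∈ pAnn (pAnn ({a} : Set S)) :=
      subset_double hproper hsc_a rfl
    rw [haA, ← ha'_eq] at ha_mem
    exact (mem_pAnn_singleton.mp ha_mem).2
  -- b' * b = 0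
  have hb'b : b' * b = 0 := by
    have hb_mem : b ∈ pAnn (pAnn ({b} : Set S)) :=
      subset_double hproper hsc_b rfl
    rw [hbB, ← hb'_eq] at hb_mem
    exact (mem_pAnn_singleton.mp hb_mem).2
  have hBCperp : pAnn ({b} : Set S) ∩ pAnn {c} ⊆ {0} := by
    rw [hbPB, hcPC]; exact perp_of_sup hproper hBCsup
  have hACperp : pAnn ({a} : Set S) ∩ pAnn {c} ⊆ {0} := by
    rw [haPA, hcPC]; exact perp_of_sup hproper hACsup
  have hMA : pAnn ({m} : Set S) ∩ pAnn {a'} ⊆ {0} := by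
    rw [hm_eq, ha'_eq, Set.inter_comm, hAC]
  have hMB : pAnn ({m} : Set S) ∩ pAnn {b'} ⊆ {0} := by
    rw [hm_eq, hb'_eq, Set.inter_comm, hBC]
  refine ⟨b * m * a, ?_, ?_⟩
  · rw [key hproper hBCperp hMA hcm ha'a, haA]
  · have hstar : star (b * m * a) = a * m * b := by
      rw [star_mul, star_mul, hsa, hsm, hsb, mul_assoc]
    rw [hstar, key hproper hACperp hMB hcm hb'b, hbB]

end Stmt16
end

section
/- Let S be a proper *-semigroup in which ∼ is reflexive and ⊥-additive. Then for all A, B ∈ P(S)^⊥, if A ≾ B and B ≾ A then A ∼ B. -/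
namespace Stmt17

/-- The *-annihilator `T^⊥`. -/
def pAnn {S : Type*} [Mul S] [Star S] [Zero S] (T : Set S) : Set S :=
  {s | ∀ t ∈ T, t * star s = 0 ∧ t * s = 0}

/-- `P(S)^⊥ = {T^⊥ : T ⊆ S}`. -/
def Pperp (S : Type*) [Mul S] [Star S] [Zero S] : Set (Set S) := {A | ∃ T : Set S, A = pAnn T}

/-- `A ∼ B`: there is `s ∈ S` with `{s}^⊥⊥ = A` and `{s*}^⊥⊥ = B`. -/
def Sim {S : Type*} [Mul S] [Star S] [Zero S] (A B : Set S) : Prop :=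
  ∃ s : S, pAnn (pAnn {s}) = A ∧ pAnn (pAnn {star s}) = B

/-- `A ≾ B`: `A ∼ C ⊆ B` for some `C ∈ P(S)^⊥`. -/
def PrecSim {S : Type*} [Mul S] [Star S] [Zero S] (A B : Set S) : Prop :=
  ∃ C ∈ Pperp S, Sim A C ∧ C ⊆ B

/-- `∼` is ⊥-additive: whenever `A ⊆ B^⊥`, `C ⊆ D^⊥`, `A ∼ C` and `B ∼ D`
(all in `P(S)^⊥`), then `A ∨ B ∼ C ∨ D`, where `X ∨ Y = (X^⊥ ∩ Y^⊥)^⊥`. -/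
def PerpAdditive (S : Type*) [Mul S] [Star S] [Zero S] : Prop :=
  ∀ A B C D : Set S, A ∈ Pperp S → B ∈ Pperp S → C ∈ Pperp S → D ∈ Pperp S →
    A ⊆ pAnn B → C ⊆ pAnn D → Sim A C → Sim B D →
    Sim (pAnn (pAnn A ∩ pAnn B)) (pAnn (pAnn C ∩ pAnn D))

section Basic
variable {S : Type*} [SemigroupWithZero S] [StarMul S]

lemma mem_pAnn {T : Set S} {z : S} : z ∈ pAnn T ↔ ∀ t ∈ T, t * star z = 0 ∧ t * z = 0 :=
  Iff.rfl

lemma mem_pAnn_singleton {x z : S} : z ∈ pAnn {x} ↔ x * star z = 0 ∧ x * z = 0 := by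
  constructor
  · intro h; exact h x rfl
  · intro h t ht; rcases ht with rfl; exact h

lemma pAnn_antitone {T U : Set S} (h : T ⊆ U) : pAnn U ⊆ pAnn T :=
  fun _ hz t ht => hz t (h ht)

lemma pAnn_union {T U : Set S} : pAnn (T ∪ U) = pAnn T ∩ pAnn U := by
  ext z
  constructor
  · intro h
    exact ⟨fun t ht => h t (Or.inl ht), fun t ht => h t (Or.inr ht)⟩
  · rintro ⟨h1, h2⟩ t (ht | ht)
    · exact h1 t ht
    · exact h2 t ht

lemma pAnn_pperp (T : Set S) : pAnn T ∈ Pperp S := ⟨T, rfl⟩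

lemma star_mem_pAnn {T : Set S} {z : S} (hz : z ∈ pAnn T) : star z ∈ pAnn T := by
  intro t ht
  obtain ⟨h1, h2⟩ := hz t ht
  rw [star_star]
  exact ⟨h2, h1⟩

lemma star_sandwich (n ξ : S) : star (n * (ξ * star n)) = n * (star ξ * star n) := by
  simp only [star_mul, star_star, mul_assoc]

/-- sandwiches with both flanks in a biperp stay in the biperp. -/
lemma sandwich_mem {U : Set S} {c c' : S} (hc : c ∈ pAnn (pAnn U)) (hc' : c' ∈ pAnn (pAnn U))
    (mid : S) : c * (mid * star c') ∈ pAnn (pAnn U) := by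
  intro w hw
  obtain ⟨_, h2⟩ := hc w hw
  obtain ⟨_, h2'⟩ := hc' w hw
  constructor
  · have hst : star (c * (mid * star c')) = c' * (star mid * star c) := by
      simp only [star_mul, star_star, mul_assoc]
    rw [hst, ← mul_assoc, h2', zero_mul]
  · rw [← mul_assoc, h2, zero_mul]

/-- sandwich membership when the flank is merely right-absorbed by `pAnn {v}`. -/
lemma sandwich_mem' {v c : S} (hc : ∀ ω ∈ pAnn ({v} : Set S), ω * c = 0) (mid : S) :
    c * (mid * star c) ∈ pAnn (pAnn {v}) := by
  intro ω hω
  have hωc := hc ω hω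
  constructor
  · have hst : star (c * (mid * star c)) = c * (star mid * star c) := by
      simp only [star_mul, star_star, mul_assoc]
    rw [hst, ← mul_assoc, hωc, zero_mul]
  · rw [← mul_assoc, hωc, zero_mul]

/-- sandwiches of `n` are killed by anything that kills `n` from the left. -/
lemma sandwich_mem_pAnn_single {k n : S} (h : k * n = 0) (ξ : S) :
    n * (ξ * star n) ∈ pAnn ({k} : Set S) := by
  rw [mem_pAnn_singleton]
  constructor
  · rw [star_sandwich, ← mul_assoc, h, zero_mul]
  · rw [← mul_assoc, h, zero_mul]

lemma Sim_symm {A B : Set S} (h : Sim A B) : Sim B A := by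
  obtain ⟨u, h1, h2⟩ := h
  exact ⟨star u, h2, by rwa [star_star]⟩

variable (hp : ∀ s : S, star s * s = 0 → s = 0)

include hp

lemma star_zero' : star (0 : S) = 0 := by
  apply hp
  rw [star_star, zero_mul]

lemma eq_zero_of_star_eq_zero {z : S} (h : star z = 0) : z = 0 := by
  rw [← star_star z, h, star_zero' hp]

lemma of_mul_star_self {z : S} (h : z * star z = 0) : z = 0 := by
  apply eq_zero_of_star_eq_zero hp
  apply hp
  rwa [star_star]

/-- If `(z z*)(z z*) = 0` then `z = 0`. -/
lemma of_sq {z : S} (h : (z * star z) * (z * star z) = 0) : z = 0 := by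
  have hM : z * star z = 0 := by
    apply hp
    have hsa : star (z * star z) = z * star z := by rw [star_mul, star_star]
    rwa [hsa]
  exact of_mul_star_self hp hM

/-- For `z ∈ pAnn T` and `t ∈ T` we also have right-annihilation against `star t`. -/
lemma right_ann_star {T : Set S} {z t : S} (hz : z ∈ pAnn T) (ht : t ∈ T) :
    z * star t = 0 ∧ star z * star t = 0 := by
  obtain ⟨h1, h2⟩ := hz t ht
  constructor
  · have := congrArg star h1
    rwa [star_mul, star_star, star_zero' hp] at this
  · have := congrArg star h2
    rwa [star_mul, star_zero' hp] at this

/-- Members of `pAnn {x}` absorb `star x` on the right. -/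
lemma mem_pAnn_single_right {x ω : S} (hω : ω ∈ pAnn {x}) : ω * star x = 0 :=
  (right_ann_star hp hω rfl).1

/-- `T ⊆ T^⊥⊥` when `T` is star-closed. -/
lemma subset_biperp {T : Set S} (hT : ∀ x ∈ T, star x ∈ T) : T ⊆ pAnn (pAnn T) := by
  intro t ht z hz
  constructor
  · exact (right_ann_star hp hz ht).1
  · have h := (hz (star t) (hT t ht)).1
    have := congrArg star h
    rwa [star_mul, star_star, star_star, star_zero' hp] at this

lemma pAnn_triple (T : Set S) : pAnn (pAnn (pAnn T)) = pAnn T := by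
  apply Set.Subset.antisymm
  · intro z hz t ht
    have hstt : star t * t ∈ pAnn (pAnn T) := by
      intro v hv
      have hvt : v * star t = 0 := by
        have h := (hv t ht).1
        have := congrArg star h
        rwa [star_mul, star_star, star_zero' hp] at this
      have hsa : star (star t * t) = star t * t := by rw [star_mul, star_star]
      constructor
      · rw [hsa, ← mul_assoc, hvt, zero_mul]
      · rw [← mul_assoc, hvt, zero_mul]
    obtain ⟨h1, h2⟩ := hz (star t * t) hstt
    constructor
    · apply hp
      rw [star_mul, star_star, mul_assoc, ← mul_assoc (star t) t (star z), h1, mul_zero]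
    · apply hp
      rw [star_mul, mul_assoc, ← mul_assoc (star t) t z, h2, mul_zero]
  · exact subset_biperp hp (fun z hz => star_mem_pAnn hz)

lemma biperp_of_pperp {A : Set S} (hA : A ∈ Pperp S) : pAnn (pAnn A) = A := by
  obtain ⟨T, rfl⟩ := hA
  exact pAnn_triple hp T

/-- `pAnn {star u * u} = pAnn {u}` (properness collapse). -/
lemma pAnn_collapse (u : S) : pAnn {star u * u} = pAnn {u} := by
  ext z
  rw [mem_pAnn_singleton, mem_pAnn_singleton]
  constructor
  · rintro ⟨h1, h2⟩
    constructor
    · apply hp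
      rw [star_mul, star_star, mul_assoc, ← mul_assoc (star u) u (star z), h1, mul_zero]
    · apply hp
      rw [star_mul, mul_assoc, ← mul_assoc (star u) u z, h2, mul_zero]
  · rintro ⟨h1, h2⟩
    exact ⟨by rw [mul_assoc, h1, mul_zero], by rw [mul_assoc, h2, mul_zero]⟩

/-- a self-adjoint element lies in its own biperp. -/
lemma sa_mem_biperp {h : S} (hsa : star h = h) : h ∈ pAnn (pAnn {h}) := by
  intro z hz
  obtain ⟨h1, _⟩ := hz h rfl
  have hzsh : z * star h = 0 := by
    have := congrArg star h1
    rwa [star_mul, star_star, star_zero' hp] at this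
  exact ⟨hzsh, by rwa [← hsa]⟩

/-- If `z ∈ W ⊆ Y` and `z ∈ pAnn Y` then `z = 0`. -/
lemma eq_zero_of_mem_sub {W Y : Set S} (hWY : W ⊆ Y) {z : S} (hz : z ∈ W)
    (hz2 : z ∈ pAnn Y) : z = 0 := by
  have := (hz2 z (hWY hz)).1
  exact of_mul_star_self hp this

/-- If all symmetric sandwiches of `n` vanish, then `n = 0`. -/
lemma sandwich_eq_zero {n : S} (h : ∀ ξ : S, n * (ξ * star n) = 0) : n = 0 := by
  apply of_sq hp
  have h2 := h (star n * n)
  calc (n * star n) * (n * star n) = n * (star n * n * star n) := by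
        simp only [mul_assoc]
    _ = 0 := by simpa only [mul_assoc] using h2

/-- orthogonality is symmetric for star-closed sets. -/
lemma orth_symm {X Y : Set S} (hX : ∀ x ∈ X, star x ∈ X) (h : Y ⊆ pAnn X) :
    X ⊆ pAnn Y := by
  intro x hx y hy
  have h1 := (h hy x hx).1
  have h2 := (h hy (star x) (hX x hx)).1
  constructor
  · have := congrArg star h1
    rwa [star_mul, star_star, star_zero' hp] at this
  · have := congrArg star h2
    rwa [star_mul, star_star, star_star, star_zero' hp] at this

end Basic


section Gen
open Classical
variable {S : Type*} [SemigroupWithZero S] [StarMul S]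

/-- chosen witness of `Sim X X`. -/
noncomputable def gwit (X : Set S) : S :=
  if h : Sim X X then h.choose else 0

/-- self-adjoint generator of a pperp set (with reflexivity). -/
noncomputable def ghat (X : Set S) : S := star (gwit X) * gwit X

lemma gwit_spec {X : Set S} (h : Sim X X) : pAnn (pAnn {gwit X}) = X := by
  rw [gwit, dif_pos h]
  exact h.choose_spec.1

lemma ghat_sa (X : Set S) : star (ghat X) = ghat X := by
  rw [ghat, star_mul, star_star]

variable (hp : ∀ s : S, star s * s = 0 → s = 0)

include hp

lemma ghat_pAnn_eq {X : Set S} (h : Sim X X) :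
    pAnn {ghat X} = pAnn X := by
  rw [ghat, pAnn_collapse hp]
  conv_rhs => rw [← gwit_spec h]
  rw [pAnn_triple hp]

lemma ghat_biperp {X : Set S} (h : Sim X X) :
    pAnn (pAnn {ghat X}) = X := by
  have hXpp : X ∈ Pperp S := ⟨pAnn {gwit X}, (gwit_spec h).symm⟩
  obtain ⟨T, rfl⟩ := hXpp
  rw [ghat_pAnn_eq hp h, pAnn_triple hp]

lemma ghat_mem {X : Set S} (h : Sim X X) :
    ghat X ∈ X := by
  have h2 := sa_mem_biperp hp (ghat_sa X)
  rwa [ghat_biperp hp h] at h2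

/-- cancellation along a similarity witness, on its support side. -/
lemma restrict_cancel {σ : S} {X : Set S} (hsim : Sim X X)
    (hdom : X ⊆ pAnn (pAnn {σ})) :
    ∀ z : S, σ * (ghat X * z) = 0 → ghat X * z = 0 := by
  intro z hz
  apply sandwich_eq_zero hp
  intro ξ
  have hg : ghat X ∈ pAnn (pAnn ({ghat X} : Set S)) := sa_mem_biperp hp (ghat_sa X)
  have hζX : (ghat X * z) * (ξ * star (ghat X * z)) ∈ X := by
    have heq : (ghat X * z) * (ξ * star (ghat X * z))
        = ghat X * ((z * (ξ * star z)) * star (ghat X)) := by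
      simp only [star_mul, star_star, mul_assoc]
    have hmem2 : (ghat X * z) * (ξ * star (ghat X * z)) ∈ pAnn (pAnn ({ghat X} : Set S)) := by
      rw [heq]
      exact sandwich_mem hg hg _
    rwa [ghat_biperp hp hsim] at hmem2
  have hζk : (ghat X * z) * (ξ * star (ghat X * z)) ∈ pAnn ({star σ * σ} : Set S) := by
    apply sandwich_mem_pAnn_single
    rw [mul_assoc, hz, mul_zero]
  have hζk' : (ghat X * z) * (ξ * star (ghat X * z)) ∈ pAnn (pAnn (pAnn ({σ} : Set S))) := by
    rw [pAnn_triple hp, ← pAnn_collapse hp σ]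
    exact hζk
  exact eq_zero_of_mem_sub hp hdom hζX hζk'

/-- Restriction lemma: the image construction along a similarity witness. -/
lemma restrict {σ : S} {X : Set S} (hsim : Sim X X)
    (hdom : X ⊆ pAnn (pAnn {σ})) :
    pAnn (pAnn {σ * ghat X}) = X ∧
      pAnn (pAnn {star (σ * ghat X)}) ⊆ pAnn (pAnn {star σ}) := by
  constructor
  · have h1 : pAnn ({σ * ghat X} : Set S) = pAnn {ghat X} := by
      apply Set.Subset.antisymm
      · intro z hz
        rw [mem_pAnn_singleton] at hz ⊢
        obtain ⟨ha, hb⟩ := hz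
        constructor
        · exact restrict_cancel hp hsim hdom (star z) (by rw [← mul_assoc]; exact ha)
        · exact restrict_cancel hp hsim hdom z (by rw [← mul_assoc]; exact hb)
      · intro z hz
        rw [mem_pAnn_singleton] at hz ⊢
        exact ⟨by rw [mul_assoc, hz.1, mul_zero], by rw [mul_assoc, hz.2, mul_zero]⟩
    rw [h1, ghat_biperp hp hsim]
  · have h0 : pAnn ({star σ} : Set S) ⊆ pAnn {star (σ * ghat X)} := by
      intro z hz
      rw [mem_pAnn_singleton] at hz ⊢
      have hst : star (σ * ghat X) = ghat X * star σ := by rw [star_mul, ghat_sa]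
      rw [hst]
      exact ⟨by rw [mul_assoc, hz.1, mul_zero], by rw [mul_assoc, hz.2, mul_zero]⟩
    exact pAnn_antitone h0

/-- Monotonicity transfer for the image construction. -/
lemma transfer {σ : S} {X₁ X₂ : Set S} (h1 : Sim X₁ X₁) (h2 : Sim X₂ X₂)
    (h12 : X₁ ⊆ X₂) :
    pAnn (pAnn {star (σ * ghat X₁)}) ⊆ pAnn (pAnn {star (σ * ghat X₂)}) := by
  have half : ∀ z' : S, ghat X₂ * (star σ * z') = 0 → ghat X₁ * (star σ * z') = 0 := by
    intro z' hz'
    have hz4 : (star σ * z') * star (star σ * z') ∈ pAnn ({ghat X₂} : Set S) := by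
      rw [mem_pAnn_singleton]
      have hsa : star ((star σ * z') * star (star σ * z'))
          = (star σ * z') * star (star σ * z') := by rw [star_mul, star_star]
      constructor
      · rw [hsa, ← mul_assoc, hz', zero_mul]
      · rw [← mul_assoc, hz', zero_mul]
    have hmem : (star σ * z') * star (star σ * z') ∈ pAnn ({ghat X₁} : Set S) := by
      have hsub : pAnn ({ghat X₂} : Set S) ⊆ pAnn {ghat X₁} := by
        rw [ghat_pAnn_eq hp h2, ghat_pAnn_eq hp h1]
        exact pAnn_antitone h12
      exact hsub hz4
    have hg1 : ghat X₁ * ((star σ * z') * star (star σ * z')) = 0 :=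
      (mem_pAnn_singleton.mp hmem).2
    have hM : (ghat X₁ * (star σ * z')) * star (ghat X₁ * (star σ * z')) = 0 := by
      rw [star_mul, ghat_sa]
      calc (ghat X₁ * (star σ * z')) * (star (star σ * z') * ghat X₁)
          = (ghat X₁ * ((star σ * z') * star (star σ * z'))) * ghat X₁ := by
            simp only [mul_assoc]
        _ = 0 := by rw [hg1, zero_mul]
    exact of_mul_star_self hp hM
  have h0 : pAnn ({star (σ * ghat X₂)} : Set S) ⊆ pAnn {star (σ * ghat X₁)} := by
    intro z hz
    rw [mem_pAnn_singleton] at hz ⊢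
    have hst₂ : star (σ * ghat X₂) = ghat X₂ * star σ := by rw [star_mul, ghat_sa]
    have hst₁ : star (σ * ghat X₁) = ghat X₁ * star σ := by rw [star_mul, ghat_sa]
    rw [hst₂] at hz
    rw [hst₁]
    obtain ⟨ha, hb⟩ := hz
    constructor
    · rw [mul_assoc]
      exact half (star z) (by rw [← mul_assoc]; exact ha)
    · rw [mul_assoc]
      exact half z (by rw [← mul_assoc]; exact hb)
  exact pAnn_antitone h0

end Gen


section Fix
variable {S : Type*} [SemigroupWithZero S] [StarMul S]
variable (hp : ∀ s : S, star s * s = 0 → s = 0)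

include hp

lemma sInter_pperp {F : Set (Set S)} (hF : ∀ W ∈ F, W ∈ Pperp S) : ⋂₀ F ∈ Pperp S := by
  refine ⟨⋃ W ∈ F, pAnn W, ?_⟩
  ext z
  constructor
  · intro hz t ht
    simp only [Set.mem_iUnion] at ht
    obtain ⟨W, hW, htW⟩ := ht
    have hzW : z ∈ W := hz W hW
    have hzb : z ∈ pAnn (pAnn W) := by
      rw [biperp_of_pperp hp (hF W hW)]; exact hzW
    exact hzb t htW
  · intro hz W hW
    rw [← biperp_of_pperp hp (hF W hW)]
    intro t ht
    exact hz t (by simp only [Set.mem_iUnion]; exact ⟨W, hW, ht⟩)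

lemma KT {A : Set S} {θ : Set S → Set S}
    (hmono : ∀ W₁ W₂, W₁ ∈ Pperp S → W₂ ∈ Pperp S → W₁ ⊆ W₂ → θ W₁ ⊆ θ W₂)
    (hpp : ∀ W, θ W ∈ Pperp S) (hA : A ∈ Pperp S) (hsubA : ∀ W, θ W ⊆ A) :
    ∃ P, P ∈ Pperp S ∧ θ P = P := by
  set F : Set (Set S) := {W | W ∈ Pperp S ∧ θ W ⊆ W} with hF
  have hAF : A ∈ F := ⟨hA, hsubA A⟩
  have hPsub : ∀ W ∈ F, ⋂₀ F ⊆ W := fun W hW => Set.sInter_subset_of_mem hW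
  have hPpp : ⋂₀ F ∈ Pperp S := sInter_pperp hp (fun W hW => hW.1)
  have h1 : θ (⋂₀ F) ⊆ ⋂₀ F := by
    intro z hz
    rw [Set.mem_sInter]
    intro W hW
    exact hW.2 ((hmono _ W hPpp hW.1 (hPsub W hW)) hz)
  have hθF : θ (⋂₀ F) ∈ F := ⟨hpp _, hmono _ _ (hpp _) hPpp h1⟩
  exact ⟨⋂₀ F, hPpp, Set.Subset.antisymm h1 (hPsub _ hθF)⟩

/-- **Density upgrade**: a similarity between dense pperp subsets of `A` and `B`
upgrades to a similarity between `A` and `B` itself. -/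
lemma upgrade {u ah bh : S} {A B RA RB : Set S}
    (hRAu : pAnn (pAnn ({u} : Set S)) = RA) (hRBu : pAnn (pAnn ({star u} : Set S)) = RB)
    (hRAA : RA ⊆ A) (hRBB : RB ⊆ B)
    (hda : ∀ z, z ∈ A → z ∈ pAnn RA → z = 0)
    (hdb : ∀ z, z ∈ B → z ∈ pAnn RB → z = 0)
    (hsaA : star ah = ah) (hA1 : pAnn ({ah} : Set S) = pAnn A)
    (hA2 : pAnn (pAnn ({ah} : Set S)) = A)
    (hsaB : star bh = bh) (hB1 : pAnn ({bh} : Set S) = pAnn B)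
    (hB2 : pAnn (pAnn ({bh} : Set S)) = B) :
    pAnn (pAnn ({bh * u * ah} : Set S)) = A ∧
      pAnn (pAnn ({star (bh * u * ah)} : Set S)) = B := by
  have hpRA : pAnn RA = pAnn ({u} : Set S) := by rw [← hRAu, pAnn_triple hp]
  have hpRB : pAnn RB = pAnn ({star u} : Set S) := by rw [← hRBu, pAnn_triple hp]
  -- cancel 1: left multiplication by bh is injective on RB-supported elements
  have cancel1 : ∀ z : S, bh * (u * (ah * z)) = 0 → u * (ah * z) = 0 := by
    intro z hz
    apply sandwich_eq_zero hp
    intro ξ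
    have hmem : (u * (ah * z)) * (ξ * star (u * (ah * z))) ∈ RB := by
      have hc : ∀ ω ∈ pAnn ({star u} : Set S), ω * u = 0 := by
        intro ω hω
        have h2 := mem_pAnn_single_right hp hω
        rwa [star_star] at h2
      have heq : (u * (ah * z)) * (ξ * star (u * (ah * z)))
          = u * ((ah * z * (ξ * (star z * ah))) * star u) := by
        simp only [star_mul, star_star, hsaA, mul_assoc]
      have hmem2 := sandwich_mem' hc (ah * z * (ξ * (star z * ah)))
      rw [← heq] at hmem2
      rwa [hRBu] at hmem2
    have hkill : (u * (ah * z)) * (ξ * star (u * (ah * z))) ∈ pAnn B := by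
      rw [← hB1]
      exact sandwich_mem_pAnn_single hz ξ
    exact eq_zero_of_mem_sub hp hRBB hmem hkill
  -- cancel 2: left multiplication by u is injective on A-supported elements
  have cancel2 : ∀ z : S, u * (ah * z) = 0 → ah * z = 0 := by
    intro z hz
    apply sandwich_eq_zero hp
    intro ξ
    have hg : ah ∈ pAnn (pAnn ({ah} : Set S)) := sa_mem_biperp hp hsaA
    have hmem : (ah * z) * (ξ * star (ah * z)) ∈ A := by
      have heq : (ah * z) * (ξ * star (ah * z))
          = ah * ((z * (ξ * star z)) * star ah) := by
        simp only [star_mul, star_star, hsaA, mul_assoc]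
      have hmem2 : (ah * z) * (ξ * star (ah * z)) ∈ pAnn (pAnn ({ah} : Set S)) := by
        rw [heq]; exact sandwich_mem hg hg _
      rwa [hA2] at hmem2
    have hkill : (ah * z) * (ξ * star (ah * z)) ∈ pAnn RA := by
      rw [hpRA, ← pAnn_collapse hp u]
      apply sandwich_mem_pAnn_single
      rw [mul_assoc, hz, mul_zero]
    exact hda _ hmem hkill
  -- mirror cancels
  have cancel1' : ∀ z : S, ah * (star u * (bh * z)) = 0 → star u * (bh * z) = 0 := by
    intro z hz
    apply sandwich_eq_zero hp
    intro ξ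
    have hmem : (star u * (bh * z)) * (ξ * star (star u * (bh * z))) ∈ RA := by
      have hc : ∀ ω ∈ pAnn ({u} : Set S), ω * star u = 0 :=
        fun ω hω => mem_pAnn_single_right hp hω
      have heq : (star u * (bh * z)) * (ξ * star (star u * (bh * z)))
          = star u * ((bh * z * (ξ * (star z * bh))) * star (star u)) := by
        simp only [star_mul, star_star, hsaB, mul_assoc]
      have hmem2 := sandwich_mem' hc (bh * z * (ξ * (star z * bh)))
      rw [← heq] at hmem2
      rwa [hRAu] at hmem2
    have hkill : (star u * (bh * z)) * (ξ * star (star u * (bh * z))) ∈ pAnn A := by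
      rw [← hA1]
      exact sandwich_mem_pAnn_single hz ξ
    exact eq_zero_of_mem_sub hp hRAA hmem hkill
  have cancel2' : ∀ z : S, star u * (bh * z) = 0 → bh * z = 0 := by
    intro z hz
    apply sandwich_eq_zero hp
    intro ξ
    have hg : bh ∈ pAnn (pAnn ({bh} : Set S)) := sa_mem_biperp hp hsaB
    have hmem : (bh * z) * (ξ * star (bh * z)) ∈ B := by
      have heq : (bh * z) * (ξ * star (bh * z))
          = bh * ((z * (ξ * star z)) * star bh) := by
        simp only [star_mul, star_star, hsaB, mul_assoc]
      have hmem2 : (bh * z) * (ξ * star (bh * z)) ∈ pAnn (pAnn ({bh} : Set S)) := by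
        rw [heq]; exact sandwich_mem hg hg _
      rwa [hB2] at hmem2
    have hkill : (bh * z) * (ξ * star (bh * z)) ∈ pAnn RB := by
      have hcol : pAnn ({u * star u} : Set S) = pAnn ({star u} : Set S) := by
        have h2 := pAnn_collapse hp (star u)
        rwa [star_star] at h2
      rw [hpRB, ← hcol]
      apply sandwich_mem_pAnn_single
      rw [mul_assoc, hz, mul_zero]
    exact hdb _ hmem hkill
  -- the left biperp
  have hstw : star (bh * u * ah) = ah * (star u * bh) := by
    simp only [star_mul, star_star, hsaA, hsaB, mul_assoc]
  constructor
  · have h1 : pAnn ({bh * u * ah} : Set S) = pAnn ({ah} : Set S) := by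
      apply Set.Subset.antisymm
      · intro v hv
        rw [mem_pAnn_singleton] at hv ⊢
        obtain ⟨ha, hb⟩ := hv
        constructor
        · apply cancel2 (star v)
          apply cancel1 (star v)
          simpa only [mul_assoc] using ha
        · apply cancel2 v
          apply cancel1 v
          simpa only [mul_assoc] using hb
      · intro v hv
        rw [mem_pAnn_singleton] at hv ⊢
        constructor
        · rw [mul_assoc, mul_assoc, hv.1, mul_zero, mul_zero]
        · rw [mul_assoc, mul_assoc, hv.2, mul_zero, mul_zero]
    rw [h1, hA2]
  · have h1 : pAnn ({star (bh * u * ah)} : Set S) = pAnn ({bh} : Set S) := by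
      apply Set.Subset.antisymm
      · intro v hv
        rw [mem_pAnn_singleton] at hv ⊢
        rw [hstw] at hv
        obtain ⟨ha, hb⟩ := hv
        constructor
        · apply cancel2' (star v)
          apply cancel1' (star v)
          simpa only [mul_assoc] using ha
        · apply cancel2' v
          apply cancel1' v
          simpa only [mul_assoc] using hb
      · intro v hv
        rw [mem_pAnn_singleton] at hv ⊢
        rw [hstw]
        constructor
        · rw [mul_assoc, mul_assoc, hv.1, mul_zero, mul_zero]
        · rw [mul_assoc, mul_assoc, hv.2, mul_zero, mul_zero]
    rw [h1, hB2]

end Fix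


section Main
variable {S : Type*} [SemigroupWithZero S] [StarMul S]

/-- image of a pperp set along (the support of) an element. -/
noncomputable def phiMap (σ : S) (X : Set S) : Set S := pAnn (pAnn {star (σ * ghat X)})

/-- the Banach–Knaster–Tarski map for the CSB argument. -/
noncomputable def thetaMap (s t : S) (A B : Set S) : Set S → Set S :=
  fun W => A ∩ pAnn (phiMap t (B ∩ pAnn (phiMap s W)))

lemma inter_pAnn_pperp {A : Set S} (hA : A ∈ Pperp S) (Z : Set S) :
    A ∩ pAnn Z ∈ Pperp S := by
  obtain ⟨T, hT⟩ := hA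
  exact ⟨T ∪ Z, by rw [pAnn_union, ← hT]⟩

variable (hp : ∀ s : S, star s * s = 0 → s = 0)

include hp

lemma phiMap_mono {σ : S} {X₁ X₂ : Set S} (h1 : Sim X₁ X₁) (h2 : Sim X₂ X₂)
    (h12 : X₁ ⊆ X₂) : phiMap σ X₁ ⊆ phiMap σ X₂ :=
  transfer hp h1 h2 h12

lemma theta_mono {s t : S} {A B : Set S} (hB : B ∈ Pperp S)
    (hrefl : ∀ X ∈ Pperp S, Sim X X) :
    ∀ W₁ W₂, W₁ ∈ Pperp S → W₂ ∈ Pperp S → W₁ ⊆ W₂ →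
      thetaMap s t A B W₁ ⊆ thetaMap s t A B W₂ := by
  intro W₁ W₂ h1 h2 h12
  have hs12 : phiMap s W₁ ⊆ phiMap s W₂ := phiMap_mono hp (hrefl _ h1) (hrefl _ h2) h12
  have hU : (B ∩ pAnn (phiMap s W₂)) ⊆ (B ∩ pAnn (phiMap s W₁)) :=
    fun z hz => ⟨hz.1, pAnn_antitone hs12 hz.2⟩
  have hUpp₁ := inter_pAnn_pperp hB (phiMap s W₁)
  have hUpp₂ := inter_pAnn_pperp hB (phiMap s W₂)
  have ht12 : phiMap t (B ∩ pAnn (phiMap s W₂)) ⊆ phiMap t (B ∩ pAnn (phiMap s W₁)) :=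
    phiMap_mono hp (hrefl _ hUpp₂) (hrefl _ hUpp₁) hU
  intro z hz
  exact ⟨hz.1, pAnn_antitone ht12 hz.2⟩

end Main

/-- (Cantor–Schroeder–Bernstein.)  Let `S` be a proper
*-semigroup in which `∼` is reflexive and ⊥-additive.  Then for all
`A, B ∈ P(S)^⊥`, `A ≾ B` and `B ≾ A` imply `A ∼ B`. -/
theorem stmt_17 {S : Type*} [SemigroupWithZero S] [StarMul S]
    (hproper : ∀ s : S, star s * s = 0 → s = 0)
    (hrefl : ∀ A ∈ Pperp S, Sim A A)
    (hadd : PerpAdditive S)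
    (A B : Set S) (hA : A ∈ Pperp S) (hB : B ∈ Pperp S)
    (hAB : PrecSim A B) (hBA : PrecSim B A) :
    Sim A B := by
  obtain ⟨C, _hCpp, ⟨s, hsA, hsC⟩, hCB⟩ := hAB
  obtain ⟨D, _hDpp, ⟨t, htB, htD⟩, hDA⟩ := hBA
  -- Knaster–Tarski fixed point of the Banach map
  obtain ⟨P, hPpp, hfix⟩ :=
    KT hproper (theta_mono (s := s) (t := t) (A := A) hproper hB hrefl)
      (fun W => inter_pAnn_pperp hA (phiMap t (B ∩ pAnn (phiMap s W))))
      hA (fun W => Set.inter_subset_left)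
  have hfix' : A ∩ pAnn (phiMap t (B ∩ pAnn (phiMap s P))) = P := hfix
  have hPA : P ⊆ A := by rw [← hfix']; exact Set.inter_subset_left
  -- restriction along s on P
  have hdomP : P ⊆ pAnn (pAnn {s}) := by rw [hsA]; exact hPA
  obtain ⟨hresP1, hresP2⟩ := restrict hproper (hrefl P hPpp) hdomP
  have hP1C : phiMap s P ⊆ C := by
    have h2 := hresP2
    rwa [hsC] at h2
  have hP1B : phiMap s P ⊆ B := hP1C.trans hCB
  have hP1pp : phiMap s P ∈ Pperp S := pAnn_pperp _
  -- restriction along t on Q'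
  have hQ'pp : (B ∩ pAnn (phiMap s P)) ∈ Pperp S := inter_pAnn_pperp hB _
  have hdomQ' : (B ∩ pAnn (phiMap s P)) ⊆ pAnn (pAnn {t}) := by
    rw [htB]; exact Set.inter_subset_left
  obtain ⟨hresQ1, hresQ2⟩ := restrict hproper (hrefl _ hQ'pp) hdomQ'
  have hQD : phiMap t (B ∩ pAnn (phiMap s P)) ⊆ D := by
    have h2 := hresQ2
    rwa [htD] at h2
  have hQA : phiMap t (B ∩ pAnn (phiMap s P)) ⊆ A := hQD.trans hDA
  have hQpp : phiMap t (B ∩ pAnn (phiMap s P)) ∈ Pperp S := pAnn_pperp _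
  -- similarities
  have hSimP : Sim P (phiMap s P) := ⟨s * ghat P, hresP1, rfl⟩
  have hSimQ' : Sim (B ∩ pAnn (phiMap s P)) (phiMap t (B ∩ pAnn (phiMap s P))) :=
    ⟨t * ghat (B ∩ pAnn (phiMap s P)), hresQ1, rfl⟩
  have hSimQ : Sim (phiMap t (B ∩ pAnn (phiMap s P))) (B ∩ pAnn (phiMap s P)) :=
    Sim_symm hSimQ'
  -- orthogonality
  have hPQ : P ⊆ pAnn (phiMap t (B ∩ pAnn (phiMap s P))) := by
    intro z hz
    rw [← hfix'] at hz
    exact hz.2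
  have hQ'P1 : (B ∩ pAnn (phiMap s P)) ⊆ pAnn (phiMap s P) := Set.inter_subset_right
  have hP1Q' : phiMap s P ⊆ pAnn (B ∩ pAnn (phiMap s P)) :=
    orth_symm hproper (fun x hx => star_mem_pAnn hx) hQ'P1
  -- apply ⊥-additivity
  obtain ⟨u, huA, huB⟩ :=
    hadd P (phiMap t (B ∩ pAnn (phiMap s P))) (phiMap s P) (B ∩ pAnn (phiMap s P))
      hPpp hQpp hP1pp hQ'pp hPQ hP1Q' hSimP hSimQ
  -- density of the two joins
  have hRAsubA : pAnn (pAnn P ∩ pAnn (phiMap t (B ∩ pAnn (phiMap s P)))) ⊆ A := by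
    have h1 : pAnn A ⊆ pAnn P ∩ pAnn (phiMap t (B ∩ pAnn (phiMap s P))) :=
      fun z hz => ⟨pAnn_antitone hPA hz, pAnn_antitone hQA hz⟩
    have h2 := pAnn_antitone h1
    rwa [biperp_of_pperp hproper hA] at h2
  have hRBsubB : pAnn (pAnn (phiMap s P) ∩ pAnn (B ∩ pAnn (phiMap s P))) ⊆ B := by
    have h1 : pAnn B ⊆ pAnn (phiMap s P) ∩ pAnn (B ∩ pAnn (phiMap s P)) :=
      fun z hz => ⟨pAnn_antitone hP1B hz, pAnn_antitone Set.inter_subset_left hz⟩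
    have h2 := pAnn_antitone h1
    rwa [biperp_of_pperp hproper hB] at h2
  have hpRA : pAnn (pAnn (pAnn P ∩ pAnn (phiMap t (B ∩ pAnn (phiMap s P)))))
      = pAnn P ∩ pAnn (phiMap t (B ∩ pAnn (phiMap s P))) := by
    rw [← pAnn_union, pAnn_triple hproper, pAnn_union]
  have hpRB : pAnn (pAnn (pAnn (phiMap s P) ∩ pAnn (B ∩ pAnn (phiMap s P))))
      = pAnn (phiMap s P) ∩ pAnn (B ∩ pAnn (phiMap s P)) := by
    rw [← pAnn_union, pAnn_triple hproper, pAnn_union]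
  have hda : ∀ z, z ∈ A →
      z ∈ pAnn (pAnn (pAnn P ∩ pAnn (phiMap t (B ∩ pAnn (phiMap s P))))) → z = 0 := by
    intro z hzA hz
    rw [hpRA] at hz
    have hzP : z ∈ P := by rw [← hfix']; exact ⟨hzA, hz.2⟩
    exact eq_zero_of_mem_sub hproper (Set.Subset.refl P) hzP hz.1
  have hdb : ∀ z, z ∈ B →
      z ∈ pAnn (pAnn (pAnn (phiMap s P) ∩ pAnn (B ∩ pAnn (phiMap s P)))) → z = 0 := by
    intro z hzB hz
    rw [hpRB] at hz
    have hzQ' : z ∈ B ∩ pAnn (phiMap s P) := ⟨hzB, hz.1⟩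
    exact eq_zero_of_mem_sub hproper (Set.Subset.refl _) hzQ' hz.2
  -- upgrade the similarity of the dense joins to A ∼ B
  have hsimA := hrefl A hA
  have hsimB := hrefl B hB
  have hfin := upgrade hproper huA huB hRAsubA hRBsubB hda hdb
      (ghat_sa A) (ghat_pAnn_eq hproper hsimA) (ghat_biperp hproper hsimA)
      (ghat_sa B) (ghat_pAnn_eq hproper hsimB) (ghat_biperp hproper hsimB)
  exact ⟨ghat B * u * ghat A, hfin.1, hfin.2⟩

end Stmt17
end
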